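/- arXiv:1005.0810 — 8 statements merged into one kernel-verified Lean document; each statement's English description precedes it below -/
import Mathlib

section
/- For all real numbers σ, η with 0 ≤ η ≤ σ and σ > 0, and all x ≥ 0, one has σx/(1+σx) − ηx/(1+ηx) ≤ (σ−η)/(√σ+√η)². -/
/-!
The difference equals `(σ - η) x / ((1 + σx)(1 + ηx))`, and the denominator is at least
`x (√σ + √η)²`: after expanding, this is `2 √(ση) x ≤ 1 + σηx²`, i.e. `(1 - √(ση) x)² ≥ 0`.
-/

theorem div_one_add_sub_div_one_add {K : Type*} [Field K] {a b : K} (ha : 1 + a ≠ 0)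
    (hb : 1 + b ≠ 0) : a / (1 + a) - b / (1 + b) = (a - b) / ((1 + a) * (1 + b)) := by
  rw [div_sub_div _ _ ha hb]
  ring

theorem mul_add_sq_le_one_add_sq_mul_mul (s t x : ℝ) :
    x * (s + t) ^ 2 ≤ (1 + s ^ 2 * x) * (1 + t ^ 2 * x) := by
  have h : (1 + s ^ 2 * x) * (1 + t ^ 2 * x) - x * (s + t) ^ 2 = (1 - s * t * x) ^ 2 := by ring
  linarith [sq_nonneg (1 - s * t * x)]

theorem mul_sqrt_add_sqrt_sq_le {σ η : ℝ} (hσ : 0 ≤ σ) (hη : 0 ≤ η) (x : ℝ) :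
    x * (Real.sqrt σ + Real.sqrt η) ^ 2 ≤ (1 + σ * x) * (1 + η * x) := by
  simpa only [Real.sq_sqrt hσ, Real.sq_sqrt hη] using
    mul_add_sq_le_one_add_sq_mul_mul (Real.sqrt σ) (Real.sqrt η) x

/-- For all real numbers `σ, η` with `0 ≤ η ≤ σ` and `σ > 0`, and all
`x ≥ 0`, one has `σx/(1+σx) − ηx/(1+ηx) ≤ (σ−η)/(√σ+√η)²`. -/
theorem sigma_eta_inequality (σ η x : ℝ) (hη : 0 ≤ η) (hησ : η ≤ σ) (hσ : 0 < σ)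
    (hx : 0 ≤ x) :
    σ * x / (1 + σ * x) - η * x / (1 + η * x) ≤
      (σ - η) / (Real.sqrt σ + Real.sqrt η) ^ 2 := by
  have hsum : 0 < (Real.sqrt σ + Real.sqrt η) ^ 2 := by
    have := Real.sqrt_pos.2 hσ
    positivity
  rw [div_one_add_sub_div_one_add (by positivity) (by positivity), ← sub_mul,
    div_le_div_iff₀ (by positivity) hsum, mul_assoc]
  exact mul_le_mul_of_nonneg_left (mul_sqrt_add_sqrt_sq_le hσ.le hη x) (sub_nonneg.2 hησ)
end

section
/- Let U be a real symmetric n×n matrix all of whose eigenvalues are at most λ₀, where λ₀ < 0, and let D be a real diagonal n×n matrix all of whose diagonal entries are at least 1. Then every eigenvalue of the matrix DU is real and at most λ₀. -/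
/-!
If `D U v = μ v` with `v ≠ 0`, then `U v = μ D⁻¹ v`, so `v⋆ U v = μ s` with
`s = ∑ |vᵢ|² / dᵢ > 0`. The spectral bound makes `λ₀ - U` positive semidefinite, also after
complexification, hence `v⋆ U v ≤ λ₀ t` with `t = ∑ |vᵢ|²` in the order of `ℂ`. Comparing
imaginary parts gives `μ ∈ ℝ`, and then `μ s ≤ λ₀ t ≤ λ₀ s` because `s ≤ t` (as `dᵢ ≥ 1`) and
`λ₀ < 0`.
-/

open Matrix
open scoped ComplexOrder

theorem RCLike.im_eq_zero_and_re_le_of_mul_le {𝕜 : Type*} [RCLike 𝕜] {μ : 𝕜} {s t c : ℝ}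
    (hs : 0 < s) (hst : s ≤ t) (hc : c ≤ 0) (h : μ * s ≤ c * t) :
    RCLike.im μ = 0 ∧ RCLike.re μ ≤ c := by
  rw [← RCLike.ofReal_mul, RCLike.le_iff_re_im] at h
  simp only [RCLike.re_mul_ofReal, RCLike.im_mul_ofReal, RCLike.ofReal_re, RCLike.ofReal_im] at h
  obtain ⟨hre, him⟩ := h
  refine ⟨by simpa [hs.ne'] using him, ?_⟩
  nlinarith

namespace Matrix

variable {ι 𝕜 : Type*} [Fintype ι] [RCLike 𝕜]

theorem star_dotProduct_self_eq (v : ι → 𝕜) : star v ⬝ᵥ v = ((∑ i, ‖v i‖ ^ 2 : ℝ) : 𝕜) := by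
  simp [dotProduct, RCLike.conj_mul]

variable [DecidableEq ι]

theorem exists_mulVec_eq_smul_of_mem_spectrum {K : Type*} [Field K] {A : Matrix ι ι K} {μ : K}
    (hμ : μ ∈ spectrum K A) : ∃ v ≠ 0, A *ᵥ v = μ • v := by
  rw [← spectrum_toLin', ← Module.End.hasEigenvalue_iff_mem_spectrum] at hμ
  obtain ⟨v, hv⟩ := hμ.exists_hasEigenvector
  exact ⟨v, hv.2, by simpa using hv.apply_eq_smul⟩

theorem IsHermitian.posSemidef_algebraMap_sub {A : Matrix ι ι 𝕜} (hA : A.IsHermitian) {c : ℝ}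
    (hc : ∀ μ ∈ spectrum 𝕜 A, μ ≤ c) : (algebraMap ℝ (Matrix ι ι 𝕜) c - A).PosSemidef := by
  refine posSemidef_iff_isHermitian_and_spectrum_nonneg.mpr
    ⟨(IsSelfAdjoint.algebraMap _ (IsSelfAdjoint.all c)).sub hA, ?_⟩
  rw [IsScalarTower.algebraMap_apply ℝ 𝕜, ← spectrum.singleton_sub_eq]
  rintro _ ⟨_, rfl, μ, hμ, rfl⟩
  exact sub_nonneg.mpr (hc μ hμ)

theorem PosSemidef.map_algebraMap {A : Matrix ι ι ℝ} (hA : A.PosSemidef) :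
    (A.map (algebraMap ℝ 𝕜)).PosSemidef := by
  open scoped MatrixOrder in
  obtain ⟨B, rfl⟩ := CStarAlgebra.nonneg_iff_eq_star_mul_self.mp hA.nonneg
  rw [star_eq_conjTranspose, Matrix.map_mul,
    conjTranspose_map _ fun r => (RCLike.conj_ofReal r).symm]
  exact posSemidef_conjTranspose_mul_self _

theorem dotProduct_mulVec_le_of_posSemidef_algebraMap_sub {U : Matrix ι ι 𝕜} {c : ℝ}
    (hU : (algebraMap ℝ (Matrix ι ι 𝕜) c - U).PosSemidef) (v : ι → 𝕜) :
    star v ⬝ᵥ U *ᵥ v ≤ c * (star v ⬝ᵥ v) := by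
  have := hU.dotProduct_mulVec_nonneg v
  rwa [sub_mulVec, dotProduct_sub, sub_nonneg, Algebra.algebraMap_eq_smul_one, smul_mulVec,
    one_mulVec, dotProduct_smul, RCLike.real_smul_eq_coe_mul] at this

theorem star_dotProduct_mulVec_eq_of_diagonal_mul_mulVec_eq_smul {d : ι → ℝ} (hd : ∀ i, d i ≠ 0)
    {U : Matrix ι ι 𝕜} {μ : 𝕜} {v : ι → 𝕜}
    (h : (diagonal (fun i => (d i : 𝕜)) * U) *ᵥ v = μ • v) :
    star v ⬝ᵥ U *ᵥ v = μ * ((∑ i, ‖v i‖ ^ 2 / d i : ℝ) : 𝕜) := by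
  have hUv : ∀ i, (U *ᵥ v) i = μ * v i / d i := fun i => by
    have := congrFun h i
    rw [← mulVec_mulVec, mulVec_diagonal, Pi.smul_apply, smul_eq_mul] at this
    rw [eq_div_iff (RCLike.ofReal_ne_zero.mpr (hd i)), ← this, mul_comm]
  simp only [dotProduct, hUv, Pi.star_apply, RCLike.star_def, RCLike.ofReal_sum, Finset.mul_sum]
  refine Finset.sum_congr rfl fun i _ => ?_
  rw [RCLike.ofReal_div, RCLike.ofReal_pow, ← RCLike.conj_mul]
  ring

theorem im_eq_zero_and_re_le_of_diagonal_mul_mulVec_eq_smul {U : Matrix ι ι 𝕜} {c : ℝ}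
    (hc : c ≤ 0) (hU : (algebraMap ℝ (Matrix ι ι 𝕜) c - U).PosSemidef) {d : ι → ℝ}
    (hd : ∀ i, 1 ≤ d i) {μ : 𝕜} {v : ι → 𝕜} (hv : v ≠ 0)
    (h : (diagonal (fun i => (d i : 𝕜)) * U) *ᵥ v = μ • v) :
    RCLike.im μ = 0 ∧ RCLike.re μ ≤ c := by
  have hd_pos : ∀ i, 0 < d i := fun i => one_pos.trans_le (hd i)
  obtain ⟨j, hj⟩ := Function.ne_iff.mp hv
  refine RCLike.im_eq_zero_and_re_le_of_mul_le (t := ∑ i, ‖v i‖ ^ 2)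
    (Finset.sum_pos' (fun i _ => by have := hd_pos i; positivity)
      ⟨j, Finset.mem_univ j, by have := hd_pos j; positivity⟩)
    (Finset.sum_le_sum fun i _ => div_le_self (by positivity) (hd i)) hc ?_
  calc μ * _ = star v ⬝ᵥ U *ᵥ v :=
        (star_dotProduct_mulVec_eq_of_diagonal_mul_mulVec_eq_smul (fun i => (hd_pos i).ne') h).symm
    _ ≤ c * (star v ⬝ᵥ v) := dotProduct_mulVec_le_of_posSemidef_algebraMap_sub hU v
    _ = c * _ := by rw [star_dotProduct_self_eq]

end Matrix

/-- Let `U` be a real symmetric `n×n` matrix all of whose eigenvalues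
are at most `λ₀ < 0`, and let `D` be a real diagonal `n×n` matrix all of whose
diagonal entries are at least `1`. Then every eigenvalue of `DU` is real and at
most `λ₀`. -/
theorem eigenvalues_of_DU_le
    (n : ℕ) (U D : Matrix (Fin n) (Fin n) ℝ) (lam0 : ℝ) (hlam0 : lam0 < 0)
    (hU_symm : U.IsSymm)
    (hU_eig : ∀ μ : ℝ, μ ∈ spectrum ℝ U → μ ≤ lam0)
    (hD_diag : ∀ i j : Fin n, i ≠ j → D i j = 0)
    (hD_ge : ∀ i : Fin n, 1 ≤ D i i) :
    ∀ μ : ℂ, μ ∈ spectrum ℂ ((D * U).map (algebraMap ℝ ℂ)) →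
      μ.im = 0 ∧ μ.re ≤ lam0 := by
  intro μ hμ
  obtain ⟨v, hv, hDUv⟩ := exists_mulVec_eq_smul_of_mem_spectrum hμ
  have hDU : (D * U).map (algebraMap ℝ ℂ) =
      diagonal (fun i => (D i i : ℂ)) * U.map (algebraMap ℝ ℂ) := by
    conv_lhs => rw [← IsDiag.diagonal_diag hD_diag]
    rw [Matrix.map_mul, diagonal_map (map_zero _)]
    rfl
  have hN := ((isHermitian_iff_isSymm.mpr hU_symm).posSemidef_algebraMap_sub
    (by simpa using hU_eig)).map_algebraMap (𝕜 := ℂ)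
  rw [Matrix.map_sub _ (map_sub _), Matrix.map_algebraMap _ _ (map_zero _) rfl] at hN
  exact im_eq_zero_and_re_le_of_diagonal_mul_mulVec_eq_smul hlam0.le hN hD_ge hv (hDU ▸ hDUv)
end

section
/- Let n ≥ 1, let λ > 0, σ > 0, and let w₁, …, wₙ be positive real numbers. For each i define sᵢ = 1/(1+σwᵢ), aᵢ = 1 + (λ wᵢ/n)·Σ_{j=1}^n w_j, fᵢ(s) = 1/aᵢ + Σ_{j=1}^n (λ wᵢ w_j/(aᵢ n)) sᵢ s_j, and uᵢ = aᵢ(fᵢ(s) − sᵢ). Then for every i, uᵢ = (σwᵢ/(1+σwᵢ))·(1 − (λ/n)·Σ_{j=1}^n w_j²/(1+σw_j)). In particular, if σ satisfies (λ/n)·Σ_{j=1}^n w_j²/(1+σw_j) = 1, then uᵢ = 0 for all i. -/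
open Finset

/-!
Multiplying out by `aᵢ` gives `uᵢ = (1 - sᵢ) - (λwᵢsᵢ/n) Σⱼ wⱼ(1 - sⱼ)`, and the identity
`1 - sⱼ = σwⱼsⱼ` turns this into `σwᵢsᵢ (1 - (λ/n) Σⱼ wⱼ²sⱼ)`.
-/

section

variable {ι K : Type*} [Fintype ι] [Field K]

theorem mul_offspring_generating_sub (lam m : K) (w t : ι → K) (i : ι) {a : K}
    (ha : a = 1 + lam * w i / m * ∑ j, w j) (ha0 : a ≠ 0) :
    a * (1 / a + ∑ j, lam * w i * w j / (a * m) * t i * t j - t i) =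
      (1 - t i) - lam * w i * t i / m * ∑ j, w j * (1 - t j) := by
  have hterm : ∀ j, a * (lam * w i * w j / (a * m) * t i * t j) =
      lam * w i * t i / m * (w j * t j) := fun j => by
    field_simp
  rw [mul_sub, mul_add, mul_one_div_cancel ha0, mul_sum, sum_congr rfl fun j _ => hterm j,
    ← mul_sum, ha]
  simp only [mul_one_sub, sum_sub_distrib]
  ring

theorem one_sub_one_div_one_add {x : K} (hx : 1 + x ≠ 0) : 1 - 1 / (1 + x) = x / (1 + x) := by
  rw [one_sub_div hx, add_sub_cancel_left]

theorem offspring_defect_of_eq_one_div_one_add_mul (lam σ m : K) (w s : ι → K) (i : ι)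
    (hs : ∀ j, s j = 1 / (1 + σ * w j)) (hD : ∀ j, 1 + σ * w j ≠ 0) :
    (1 - s i) - lam * w i * s i / m * ∑ j, w j * (1 - s j) =
      σ * w i / (1 + σ * w i) * (1 - lam / m * ∑ j, w j ^ 2 / (1 + σ * w j)) := by
  have hsum : ∑ j, w j * (1 - s j) = σ * ∑ j, w j ^ 2 / (1 + σ * w j) := by
    rw [mul_sum]
    refine sum_congr rfl fun j _ => ?_
    rw [hs, one_sub_one_div_one_add (hD j)]
    ring
  rw [hsum, hs, one_sub_one_div_one_add (hD i)]
  ring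

end

theorem extinction_probability_equation_general
    (n : ℕ) (lam σ : ℝ) (hlam : 0 < lam) (hσ : 0 < σ)
    (w : Fin n → ℝ) (hw : ∀ i, 0 < w i)
    (s a u : Fin n → ℝ) (f : Fin n → (Fin n → ℝ) → ℝ)
    (hs : ∀ i, s i = 1 / (1 + σ * w i))
    (ha : ∀ i, a i = 1 + lam * w i / n * ∑ j, w j)
    (hf : ∀ i (t : Fin n → ℝ),
      f i t = 1 / a i + ∑ j, lam * w i * w j / (a i * n) * t i * t j)
    (hu : ∀ i, u i = a i * (f i s - s i)) :
    (∀ i, u i =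
        σ * w i / (1 + σ * w i) * (1 - lam / n * ∑ j, (w j) ^ 2 / (1 + σ * w j))) ∧
    (lam / n * ∑ j, (w j) ^ 2 / (1 + σ * w j) = 1 → ∀ i, u i = 0) := by
  have hD : ∀ j, 1 + σ * w j ≠ 0 := fun j => by have := hw j; positivity
  have hsum : 0 ≤ ∑ j, w j := sum_nonneg fun j _ => (hw j).le
  have key : ∀ i, u i =
      σ * w i / (1 + σ * w i) * (1 - lam / n * ∑ j, (w j) ^ 2 / (1 + σ * w j)) := fun i => by
    have ha0 : a i ≠ 0 := by rw [ha i]; have := hw i; positivity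
    rw [hu, hf, mul_offspring_generating_sub lam n w s i (ha i) ha0,
      offspring_defect_of_eq_one_div_one_add_mul lam σ n w s i hs hD]
  exact ⟨key, fun h i => by rw [key i, h, sub_self, mul_zero]⟩

/-- Let `n ≥ 1`, `λ > 0`, `σ > 0`, and let `w₁, …, wₙ` be positive
reals. With `sᵢ = 1/(1+σwᵢ)`, `aᵢ = 1 + (λwᵢ/n)·Σⱼ wⱼ`,
`fᵢ(s) = 1/aᵢ + Σⱼ (λwᵢwⱼ/(aᵢn)) sᵢ sⱼ`, and `uᵢ = aᵢ(fᵢ(s) − sᵢ)`, one has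
`uᵢ = (σwᵢ/(1+σwᵢ))·(1 − (λ/n)·Σⱼ wⱼ²/(1+σwⱼ))` for every `i`; in particular, if
`(λ/n)·Σⱼ wⱼ²/(1+σwⱼ) = 1` then `uᵢ = 0` for all `i`. -/
theorem extinction_probability_equation
    (n : ℕ) (hn : 1 ≤ n) (lam σ : ℝ) (hlam : 0 < lam) (hσ : 0 < σ)
    (w : Fin n → ℝ) (hw : ∀ i, 0 < w i)
    (s a u : Fin n → ℝ) (f : Fin n → (Fin n → ℝ) → ℝ)
    (hs : ∀ i, s i = 1 / (1 + σ * w i))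
    (ha : ∀ i, a i = 1 + lam * w i / n * ∑ j, w j)
    (hf : ∀ i (t : Fin n → ℝ),
      f i t = 1 / a i + ∑ j, lam * w i * w j / (a i * n) * t i * t j)
    (hu : ∀ i, u i = a i * (f i s - s i)) :
    (∀ i, u i =
        σ * w i / (1 + σ * w i) * (1 - lam / n * ∑ j, (w j) ^ 2 / (1 + σ * w j))) ∧
    (lam / n * ∑ j, (w j) ^ 2 / (1 + σ * w j) = 1 → ∀ i, u i = 0) :=
  extinction_probability_equation_general n lam σ hlam hσ w hw s a u f hs ha hf hu
end

section
/- Let w be a nonnegative real random variable and let C > 0 and α ∈ (2,3) be such that lim_{x→∞} x^{α−1} P(w > x) = C. Then lim_{σ→0⁺} σ^{3−α} E[w²/(1+σw)] = C(α−1)π/sin(πα). -/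
/-!
With `T t = P(w > t)` and `d/dt (t² / (1 + σ t)) = t (2 + σ t) / (1 + σ t)²`, the layer-cake
formula followed by the substitution `t = u / σ` gives
`σ^(3-α) E[w² / (1 + σ w)] = ∫₀^∞ u^(2-α) (2 + u) / (1 + u)² · G (u / σ) du`
with `G x = x^(α-1) T x`. As `G` is bounded on `(0, ∞)` and tends to `C`, dominated convergence
sends this to `C ∫₀^∞ u^(2-α) (2 + u) / (1 + u)² du`. Splitting
`(2 + u) / (1 + u)² = 1 / (1 + u) + 1 / (1 + u)²` turns the last integral into
`B(3-α, α-2) + B(3-α, α-1) = (α-1) Γ(3-α) Γ(α-2)`, which is `(α-1) π / sin (π α)` by the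
reflection formula.
-/

open MeasureTheory Filter Real Set ProbabilityTheory
open scoped Topology

section BetaIntegrals

variable {s t : ℝ}

lemma lintegral_rpow_mul_one_sub_rpow (hs : 0 < s) (ht : 0 < t) :
    ∫⁻ x in Ioo 0 1, ENNReal.ofReal (x ^ (s - 1) * (1 - x) ^ (t - 1)) =
      ENNReal.ofReal (beta s t) := by
  have hB := beta_pos hs ht
  have h := lintegral_betaPDF_eq_one hs ht
  simp_rw [lintegral_betaPDF, mul_assoc,
    ENNReal.ofReal_mul (one_div_pos.2 hB).le] at h
  rw [lintegral_const_mul _ (by fun_prop), ENNReal.ofReal_div_of_pos hB, ENNReal.ofReal_one,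
    one_div, mul_comm] at h
  simpa using ENNReal.eq_inv_of_mul_eq_one_left h

lemma lintegral_rpow_div_one_add_rpow (hs : 0 < s) (ht : 0 < t) :
    ∫⁻ x in Ioi 0, ENNReal.ofReal (x ^ (s - 1) / (1 + x) ^ (s + t)) =
      ENNReal.ofReal (beta s t) := by
  have himage : (fun u : ℝ => u / (1 - u)) '' Ioo 0 1 = Ioi 0 := by
    refine Subset.antisymm ?_ fun x (hx : 0 < x) => ⟨x / (1 + x), ?_, ?_⟩
    · rintro _ ⟨u, ⟨hu0, hu1⟩, rfl⟩
      exact div_pos hu0 (sub_pos.2 hu1)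
    · exact ⟨by positivity, (div_lt_one (by positivity)).2 (by linarith)⟩
    · field_simp
      ring
  have hderiv : ∀ u ∈ Ioo (0 : ℝ) 1,
      HasDerivWithinAt (fun u : ℝ => u / (1 - u)) (((1 - u) ^ 2)⁻¹) (Ioo 0 1) u := by
    rintro u ⟨-, hu1⟩
    have hu : 1 - u ≠ 0 := (sub_pos.2 hu1).ne'
    refine (((hasDerivAt_id' u).div ((hasDerivAt_id' u).const_sub 1) hu).congr_deriv
      ?_).hasDerivWithinAt
    field_simp
    ring
  have hinj : InjOn (fun u : ℝ => u / (1 - u)) (Ioo 0 1) := by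
    rintro a ⟨-, ha⟩ b ⟨-, hb⟩ hab
    rw [div_eq_div_iff (sub_pos.2 ha).ne' (sub_pos.2 hb).ne'] at hab
    linarith
  rw [← himage, lintegral_image_eq_lintegral_abs_deriv_mul measurableSet_Ioo hderiv hinj,
    ← lintegral_rpow_mul_one_sub_rpow hs ht]
  refine setLIntegral_congr_fun measurableSet_Ioo fun u ⟨hu0, hu1⟩ => ?_
  have hv : 0 < 1 - u := sub_pos.2 hu1
  rw [← ENNReal.ofReal_mul (abs_nonneg _), abs_of_pos (by positivity)]
  congr 1
  have hsum : (1 - u) ^ (s + t) = (1 - u) ^ (s - 1) * (1 - u) ^ (t - 1) * (1 - u) ^ 2 := by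
    rw [← rpow_add hv, ← Real.rpow_natCast, ← rpow_add hv]
    norm_num
    ring_nf
  rw [show 1 + u / (1 - u) = (1 - u)⁻¹ by field_simp; ring, inv_rpow hv.le,
    div_rpow hu0.le hv.le, hsum]
  have hvs := rpow_pos_of_pos hv (s - 1)
  have hvt := rpow_pos_of_pos hv (t - 1)
  field_simp

end BetaIntegrals

lemma beta_three_sub_add_beta_three_sub {α : ℝ} (hα : α ≠ 2) :
    beta (3 - α) (α - 2) + beta (3 - α) (α - 1) = (α - 1) * π / sin (π * α) := by
  have hsin : sin (π * α) = sin (π * (3 - α)) := by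
    rw [show π * (3 - α) = π - π * α + 2 * π by ring, sin_add_two_pi, sin_pi_sub]
  have hrec : Gamma (α - 1) = (α - 2) * Gamma (α - 2) := by
    rw [← Gamma_add_one (sub_ne_zero.2 hα)]
    ring_nf
  rw [hsin, mul_div_assoc, ← Gamma_mul_Gamma_one_sub, beta, beta, hrec,
    show 1 - (3 - α) = α - 2 by ring]
  norm_num
  ring

section Kernel

variable {α : ℝ}

lemma lintegral_rpow_mul_two_add_div_one_add_sq (hα : α ∈ Ioo 2 3) :
    ∫⁻ u in Ioi 0, ENNReal.ofReal (u ^ (2 - α) * ((2 + u) / (1 + u) ^ 2)) =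
      ENNReal.ofReal (beta (3 - α) (α - 2) + beta (3 - α) (α - 1)) := by
  obtain ⟨hα2, hα3⟩ := hα
  have hsplit : ∀ u ∈ Ioi (0 : ℝ), ENNReal.ofReal (u ^ (2 - α) * ((2 + u) / (1 + u) ^ 2)) =
      ENNReal.ofReal (u ^ ((3 - α) - 1) / (1 + u) ^ ((3 - α) + (α - 2))) +
        ENNReal.ofReal (u ^ ((3 - α) - 1) / (1 + u) ^ ((3 - α) + (α - 1))) := by
    intro u (hu : 0 < u)
    rw [← ENNReal.ofReal_add (by positivity) (by positivity)]
    congr 1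
    rw [show (3 - α) - 1 = 2 - α by ring, show (3 - α) + (α - 2) = 1 by ring,
      show (3 - α) + (α - 1) = 2 by ring, rpow_one, rpow_two]
    field_simp
    ring
  rw [setLIntegral_congr_fun measurableSet_Ioi hsplit, lintegral_add_left (by fun_prop),
    lintegral_rpow_div_one_add_rpow (by linarith) (by linarith),
    lintegral_rpow_div_one_add_rpow (by linarith) (by linarith),
    ← ENNReal.ofReal_add (beta_pos (by linarith) (by linarith)).le
      (beta_pos (by linarith) (by linarith)).le]

lemma integrableOn_rpow_mul_two_add_div_one_add_sq (hα : α ∈ Ioo 2 3) :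
    IntegrableOn (fun u : ℝ => u ^ (2 - α) * ((2 + u) / (1 + u) ^ 2)) (Ioi 0) := by
  refine (lintegral_ofReal_ne_top_iff_integrable (by fun_prop : Measurable _).aestronglyMeasurable
    ((ae_restrict_iff' measurableSet_Ioi).2 (ae_of_all _ fun u (hu : 0 < u) => ?_))).1 ?_
  · positivity
  · rw [lintegral_rpow_mul_two_add_div_one_add_sq hα]
    exact ENNReal.ofReal_ne_top

lemma integral_rpow_mul_two_add_div_one_add_sq (hα : α ∈ Ioo 2 3) :
    ∫ u in Ioi 0, u ^ (2 - α) * ((2 + u) / (1 + u) ^ 2) = (α - 1) * π / sin (π * α) := by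
  obtain ⟨hα2, hα3⟩ := hα
  rw [integral_eq_lintegral_of_nonneg_ae
      ((ae_restrict_iff' measurableSet_Ioi).2 (ae_of_all _ fun u (hu : 0 < u) => by positivity))
      (by fun_prop : Measurable _).aestronglyMeasurable,
    lintegral_rpow_mul_two_add_div_one_add_sq ⟨hα2, hα3⟩,
    ENNReal.toReal_ofReal (add_nonneg (beta_pos (by linarith) (by linarith)).le
      (beta_pos (by linarith) (by linarith)).le),
    beta_three_sub_add_beta_three_sub hα2.ne']

end Kernel

lemma exists_abs_rpow_mul_le_of_tendsto {T : ℝ → ℝ} {p B C : ℝ} (hp : 0 ≤ p)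
    (hT : ∀ x > 0, |T x| ≤ B) (h : Tendsto (fun x => x ^ p * T x) atTop (𝓝 C)) :
    ∃ M, ∀ x > 0, |x ^ p * T x| ≤ M := by
  obtain ⟨x₁, hx₁⟩ := eventually_atTop.1 (h.abs.eventually (eventually_le_nhds (lt_add_one |C|)))
  refine ⟨max (|C| + 1) (x₁ ^ p * B), fun x hx => ?_⟩
  rcases le_or_gt x₁ x with hle | hlt
  · exact (hx₁ x hle).trans (le_max_left _ _)
  · refine le_max_of_le_right ?_
    rw [abs_mul, abs_of_nonneg (rpow_nonneg hx.le p)]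
    exact mul_le_mul (rpow_le_rpow hx.le hlt.le hp) (hT x hx) (abs_nonneg _)
      (rpow_nonneg (hx.trans hlt).le p)

lemma tendsto_setIntegral_mul_comp_div_nhdsGT {k G : ℝ → ℝ} {C M : ℝ}
    (hk : IntegrableOn k (Ioi 0)) (hG : Measurable G) (hGM : ∀ x > 0, |G x| ≤ M)
    (hGC : Tendsto G atTop (𝓝 C)) :
    Tendsto (fun σ => ∫ u in Ioi 0, k u * G (u / σ)) (𝓝[>] 0)
      (𝓝 (∫ u in Ioi 0, k u * C)) := by
  refine tendsto_integral_filter_of_dominated_convergence (fun u => |k u| * M)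
    (Eventually.of_forall fun σ =>
      hk.aestronglyMeasurable.mul (hG.comp (measurable_id.div_const σ)).aestronglyMeasurable)
    ?_ (hk.norm.mul_const M) ?_
  · filter_upwards [self_mem_nhdsWithin] with σ (hσ : 0 < σ)
    refine (ae_restrict_iff' measurableSet_Ioi).2 (Eventually.of_forall fun u (hu : 0 < u) => ?_)
    rw [norm_mul, Real.norm_eq_abs, Real.norm_eq_abs]
    exact mul_le_mul_of_nonneg_left (hGM _ (div_pos hu hσ)) (abs_nonneg _)
  · refine (ae_restrict_iff' measurableSet_Ioi).2 (Eventually.of_forall fun u (hu : 0 < u) => ?_)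
    have hdiv : Tendsto (fun σ : ℝ => u / σ) (𝓝[>] 0) atTop := by
      simpa only [div_eq_mul_inv] using tendsto_inv_nhdsGT_zero.const_mul_atTop hu
    exact (hGC.comp hdiv).const_mul (k u)

lemma measurable_measure_lt {Ω : Type*} [MeasurableSpace Ω] (μ : Measure Ω) (f : Ω → ℝ) :
    Measurable fun t : ℝ => μ {ω | t < f ω} :=
  Antitone.measurable fun _ _ hst => measure_mono fun _ h => hst.trans_lt h

lemma integral_comp_eq_setIntegral_measureReal_lt_mul {Ω : Type*} [MeasurableSpace Ω]
    (μ : Measure Ω) [IsFiniteMeasure μ] {f : Ω → ℝ} {F g : ℝ → ℝ} (hf_nn : ∀ ω, 0 ≤ f ω)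
    (hf : Measurable f) (hF : Measurable F) (hF0 : F 0 = 0)
    (hFg : ∀ x ≥ 0, HasDerivAt F (g x) x) (hg : ContinuousOn g (Ici 0))
    (hg_nn : ∀ x ≥ 0, 0 ≤ g x) :
    ∫ ω, F (f ω) ∂μ = ∫ t in Ioi 0, μ.real {ω | t < f ω} * g t := by
  have hg_int : ∀ x ≥ 0, IntervalIntegrable g volume 0 x := fun x hx =>
    (hg.mono (by rw [uIcc_of_le hx]; exact Icc_subset_Ici_self)).intervalIntegrable
  have hFint : ∀ x ≥ 0, ∫ t in 0..x, g t = F x := fun x hx => by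
    rw [intervalIntegral.integral_eq_sub_of_hasDerivAt
      (fun y hy => hFg y (by rw [uIcc_of_le hx] at hy; exact hy.1)) (hg_int x hx), hF0, sub_zero]
  have hFnn : ∀ ω, 0 ≤ F (f ω) := fun ω => hFint _ (hf_nn ω) ▸
    intervalIntegral.integral_nonneg (hf_nn ω) fun y hy => hg_nn y hy.1
  have hlayer := lintegral_comp_eq_lintegral_meas_lt_mul μ (ae_of_all _ hf_nn) hf.aemeasurable
    (fun t ht => hg_int t ht.le)
    ((ae_restrict_iff' measurableSet_Ioi).2 (ae_of_all _ fun t ht => hg_nn t ht.le))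
  simp only [hFint _ (hf_nn _)] at hlayer
  rw [integral_eq_lintegral_of_nonneg_ae (ae_of_all _ hFnn) (hF.comp hf).aestronglyMeasurable,
    hlayer, ← integral_toReal]
  · refine setIntegral_congr_fun measurableSet_Ioi fun t (ht : 0 < t) => ?_
    rw [ENNReal.toReal_mul, ENNReal.toReal_ofReal (hg_nn t ht.le), measureReal_def]
  · exact (measurable_measure_lt μ f).aemeasurable.mul
      ((hg.mono Ioi_subset_Ici_self).aemeasurable measurableSet_Ioi).ennreal_ofReal
  · exact ae_of_all _ fun t => ENNReal.mul_lt_top (measure_lt_top μ _) ENNReal.ofReal_lt_top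

lemma integral_sq_div_one_add_mul {Ω : Type*} [MeasurableSpace Ω] (μ : Measure Ω)
    [IsFiniteMeasure μ] {f : Ω → ℝ} (hf_nn : ∀ ω, 0 ≤ f ω) (hf : Measurable f) {σ : ℝ}
    (hσ : 0 ≤ σ) :
    ∫ ω, f ω ^ 2 / (1 + σ * f ω) ∂μ =
      ∫ t in Ioi 0, μ.real {ω | t < f ω} * (t * (2 + σ * t) / (1 + σ * t) ^ 2) := by
  refine integral_comp_eq_setIntegral_measureReal_lt_mul μ hf_nn hf
    (F := fun x => x ^ 2 / (1 + σ * x)) (g := fun t => t * (2 + σ * t) / (1 + σ * t) ^ 2)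
    (by fun_prop) (by simp)
    (fun x hx => ?_) (fun x (hx : 0 ≤ x) => ?_) (fun x (hx : 0 ≤ x) => by positivity)
  · have hne : 1 + σ * x ≠ 0 := by positivity
    refine ((hasDerivAt_pow 2 x).div ((hasDerivAt_id' x).const_mul σ |>.const_add 1) hne
      |>.congr_deriv ?_)
    field_simp
    ring
  · exact (show ContinuousAt (fun t => t * (2 + σ * t) / (1 + σ * t) ^ 2) x from
      ContinuousAt.div (by fun_prop) (by fun_prop) (by positivity)).continuousWithinAt

lemma rpow_mul_integral_sq_div_one_add_mul {Ω : Type*} [MeasurableSpace Ω] (μ : Measure Ω)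
    [IsFiniteMeasure μ] {f : Ω → ℝ} (hf_nn : ∀ ω, 0 ≤ f ω) (hf : Measurable f) (α : ℝ) {σ : ℝ}
    (hσ : 0 < σ) :
    σ ^ (3 - α) * ∫ ω, f ω ^ 2 / (1 + σ * f ω) ∂μ =
      ∫ u in Ioi 0, u ^ (2 - α) * ((2 + u) / (1 + u) ^ 2) *
        ((u / σ) ^ (α - 1) * μ.real {ω | u / σ < f ω}) := by
  have hsub := integral_comp_mul_left_Ioi'
    (fun t => μ.real {ω | t < f ω} * (t * (2 + σ * t) / (1 + σ * t) ^ 2)) 0 (inv_pos.2 hσ)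
  rw [mul_zero] at hsub
  rw [integral_sq_div_one_add_mul μ hf_nn hf hσ.le, ← hsub, smul_eq_mul, ← mul_assoc,
    ← integral_const_mul]
  refine setIntegral_congr_fun measurableSet_Ioi fun u (hu : 0 < u) => ?_
  obtain ⟨x, hx, rfl⟩ : ∃ x, 0 < x ∧ u = σ * x := ⟨u / σ, div_pos hu hσ, by field_simp⟩
  rw [inv_mul_cancel_left₀ hσ.ne', mul_div_cancel_left₀ _ hσ.ne', mul_rpow hσ.le hx.le,
    show 3 - α = (2 - α) + 1 by ring, rpow_add hσ, rpow_one]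
  have hx1 : x ^ (2 - α) * x ^ (α - 1) = x := by
    rw [← rpow_add hx, show 2 - α + (α - 1) = 1 by ring, rpow_one]
  have hσα := rpow_pos_of_pos hσ (2 - α)
  field_simp
  linear_combination -μ.real {ω | x < f ω} * hx1

theorem tail_asymptotics_alpha_two_three_general
    {Ω : Type*} [MeasurableSpace Ω] (μ : Measure Ω) [IsProbabilityMeasure μ]
    (w : Ω → ℝ) (hw_meas : Measurable w) (hw_nonneg : ∀ ω, 0 ≤ w ω)
    (C α : ℝ) (hα : α ∈ Set.Ioo (2 : ℝ) 3)
    (htail : Tendsto (fun x : ℝ => x ^ (α - 1) * (μ {ω | x < w ω}).toReal)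
      atTop (𝓝 C)) :
    Tendsto (fun σ : ℝ => σ ^ (3 - α) * ∫ ω, (w ω) ^ 2 / (1 + σ * w ω) ∂μ)
      (𝓝[>] 0) (𝓝 (C * (α - 1) * Real.pi / Real.sin (Real.pi * α))) := by
  have hG_meas : Measurable fun x : ℝ => x ^ (α - 1) * (μ {ω | x < w ω}).toReal :=
    (measurable_id.pow_const _).mul (measurable_measure_lt μ w).ennreal_toReal
  obtain ⟨M, hM⟩ := exists_abs_rpow_mul_le_of_tendsto (by linarith [hα.1] : 0 ≤ α - 1)
    (fun x _ => (abs_of_nonneg measureReal_nonneg).trans_le measureReal_le_one) htail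
  have hlim := tendsto_setIntegral_mul_comp_div_nhdsGT
    (integrableOn_rpow_mul_two_add_div_one_add_sq hα) hG_meas hM htail
  rw [integral_mul_const, integral_rpow_mul_two_add_div_one_add_sq hα,
    show (α - 1) * π / sin (π * α) * C = C * (α - 1) * π / sin (π * α) by ring] at hlim
  refine hlim.congr' ?_
  filter_upwards [self_mem_nhdsWithin] with σ hσ
  exact (rpow_mul_integral_sq_div_one_add_mul μ hw_nonneg hw_meas α hσ).symm

/-- Let `w ≥ 0` with tail `P(w > x) ~ C x^{-(α-1)}` for some `C > 0`
and `α ∈ (2,3)`. Then `E[w²/(1+σw)] ~ C(α−1)π/sin(πα) · σ^{α−3}` as `σ → 0⁺`,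
i.e. `σ^{3−α} E[w²/(1+σw)] → C(α−1)π/sin(πα)`. -/
theorem tail_asymptotics_alpha_two_three
    {Ω : Type*} [MeasurableSpace Ω] (μ : Measure Ω) [IsProbabilityMeasure μ]
    (w : Ω → ℝ) (hw_meas : Measurable w) (hw_nonneg : ∀ ω, 0 ≤ w ω)
    (C α : ℝ) (hC : 0 < C) (hα : α ∈ Set.Ioo (2 : ℝ) 3)
    (htail : Tendsto (fun x : ℝ => x ^ (α - 1) * (μ {ω | x < w ω}).toReal)
      atTop (𝓝 C)) :
    Tendsto (fun σ : ℝ => σ ^ (3 - α) * ∫ ω, (w ω) ^ 2 / (1 + σ * w ω) ∂μ)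
      (𝓝[>] 0) (𝓝 (C * (α - 1) * Real.pi / Real.sin (Real.pi * α))) :=
  tail_asymptotics_alpha_two_three_general μ w hw_meas hw_nonneg C α hα htail
end

section
/- Let w be a nonnegative real random variable and let C > 0 be such that lim_{x→∞} x² P(w > x) = C (i.e. the tail exponent is α = 3). Then lim_{σ→0⁺} E[w²/(1+σw)] / (−log σ) = 2C. -/
open MeasureTheory Filter Real Set
open scoped Topology

/-!
By the layer-cake formula, `E[w² / (1 + σ w)] = ∫₀^∞ P(w > t) k_σ(t) dt` with
`k_σ(t) = (2t + σt²) / (1 + σt)²`, the derivative of `t² / (1 + σt)`. Past a large `A` the tail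
`P(w > t)` lies between `(C ± ε) / t²`, and `k_σ(t) / t²` has the explicit primitive
`2 log t - 2 log (1 + σt) + 1 / (1 + σt)`, so `∫_A^∞ k_σ(t) / t² dt = -2 log σ + O_A(1)`; the
part over `(0, A]` is at most `A²`. Dividing by `-log σ` squeezes the ratio between `2(C ± ε)`.
-/

section LayerCake

variable {α : Type*} [MeasurableSpace α] {μ : Measure α} [IsFiniteMeasure μ]

lemma antitone_measureReal_lt (f : α → ℝ) : Antitone fun t => μ.real {ω | t < f ω} :=
  fun _ _ hst => measureReal_mono fun _ h => hst.trans_lt h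

theorem integral_comp_eq_setIntegral_measureReal_lt_mul_s7 {f : α → ℝ} {G g : ℝ → ℝ}
    (hf_nonneg : ∀ ω, 0 ≤ f ω) (hf_meas : Measurable f) (hG_meas : Measurable G)
    (hg_meas : Measurable g) (hg_nonneg : ∀ t, 0 ≤ t → 0 ≤ g t)
    (hg_int : ∀ t > 0, IntervalIntegrable g volume 0 t)
    (hG : ∀ x, 0 ≤ x → ∫ t in 0..x, g t = G x) :
    ∫ ω, G (f ω) ∂μ = ∫ t in Ioi 0, μ.real {ω | t < f ω} * g t := by
  have hG_nonneg : ∀ x, 0 ≤ x → 0 ≤ G x := fun x hx =>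
    hG x hx ▸ intervalIntegral.integral_nonneg hx fun t ht => hg_nonneg t ht.1
  have htail_meas := (antitone_measureReal_lt (μ := μ) f).measurable
  rw [integral_eq_lintegral_of_nonneg_ae (ae_of_all _ fun ω => hG_nonneg _ (hf_nonneg ω))
      (hG_meas.comp hf_meas).aestronglyMeasurable,
    integral_eq_lintegral_of_nonneg_ae
      ((ae_restrict_mem measurableSet_Ioi).mono fun t (ht : 0 < t) =>
        mul_nonneg measureReal_nonneg (hg_nonneg t ht.le))
      (htail_meas.mul hg_meas).aestronglyMeasurable]
  congr 1
  calc ∫⁻ ω, ENNReal.ofReal (G (f ω)) ∂μ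
      = ∫⁻ ω, ENNReal.ofReal (∫ t in 0..f ω, g t) ∂μ := by
        simp only [hG _ (hf_nonneg _)]
    _ = ∫⁻ t in Ioi 0, μ {ω | t < f ω} * ENNReal.ofReal (g t) :=
        lintegral_comp_eq_lintegral_meas_lt_mul μ (ae_of_all _ hf_nonneg) hf_meas.aemeasurable
          hg_int ((ae_restrict_mem measurableSet_Ioi).mono fun t (ht : 0 < t) =>
            hg_nonneg t ht.le)
    _ = ∫⁻ t in Ioi 0, ENNReal.ofReal (μ.real {ω | t < f ω} * g t) := by
        refine setLIntegral_congr_fun measurableSet_Ioi fun t (ht : 0 < t) => ?_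
        rw [ENNReal.ofReal_mul measureReal_nonneg, ofReal_measureReal]

end LayerCake

namespace TailAsymptotics

noncomputable def kernel (σ t : ℝ) : ℝ := (2 * t + σ * t ^ 2) / (1 + σ * t) ^ 2

noncomputable def tailPrimitive (σ t : ℝ) : ℝ := 2 * log t - 2 * log (1 + σ * t) + (1 + σ * t)⁻¹

variable {σ t A : ℝ}

lemma kernel_nonneg (hσ : 0 ≤ σ) (ht : 0 ≤ t) : 0 ≤ kernel σ t := by
  unfold kernel; positivity

lemma measurable_kernel : Measurable (kernel σ) := by
  unfold kernel; fun_prop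

lemma hasDerivAt_sq_div_one_add_mul (ht : 1 + σ * t ≠ 0) :
    HasDerivAt (fun s => s ^ 2 / (1 + σ * s)) (kernel σ t) t := by
  have hden : HasDerivAt (fun s => 1 + σ * s) σ t := by
    simpa using ((hasDerivAt_id t).const_mul σ).const_add 1
  refine ((hasDerivAt_pow 2 t).div hden ht).congr_deriv ?_
  unfold kernel
  field_simp
  ring

lemma continuousOn_kernel (hσ : 0 ≤ σ) : ContinuousOn (kernel σ) (Ici 0) :=
  ContinuousOn.div (by fun_prop) (by fun_prop) fun t (ht : 0 ≤ t) => by positivity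

lemma intervalIntegrable_kernel (hσ : 0 ≤ σ) (hA : 0 ≤ A) :
    IntervalIntegrable (kernel σ) volume 0 A :=
  ((continuousOn_kernel hσ).mono Icc_subset_Ici_self).intervalIntegrable_of_Icc hA

lemma integral_kernel (hσ : 0 ≤ σ) (hA : 0 ≤ A) :
    ∫ t in 0..A, kernel σ t = A ^ 2 / (1 + σ * A) := by
  rw [intervalIntegral.integral_eq_sub_of_hasDerivAt (f := fun s => s ^ 2 / (1 + σ * s))
    (fun t ht => hasDerivAt_sq_div_one_add_mul ?_) (intervalIntegrable_kernel hσ hA)]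
  · simp
  · rw [uIcc_of_le hA] at ht
    have := ht.1
    positivity

lemma hasDerivAt_tailPrimitive (hσ : 0 ≤ σ) (ht : 0 < t) :
    HasDerivAt (tailPrimitive σ) (kernel σ t / t ^ 2) t := by
  have hpos : 0 < 1 + σ * t := by positivity
  have hden : HasDerivAt (fun s => 1 + σ * s) σ t := by
    simpa using ((hasDerivAt_id t).const_mul σ).const_add 1
  have H := (((hasDerivAt_log ht.ne').const_mul 2).sub
    (((hasDerivAt_log hpos.ne').comp t hden).const_mul 2)).add (hden.inv hpos.ne')
  refine H.congr_deriv ?_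
  unfold kernel
  field_simp
  ring

lemma tendsto_tailPrimitive_atTop (hσ : 0 < σ) :
    Tendsto (tailPrimitive σ) atTop (𝓝 (-2 * log σ)) := by
  have hlog : Tendsto (fun t => log (t⁻¹ + σ)) atTop (𝓝 (log σ)) := by
    refine ((continuousAt_log hσ.ne').tendsto).comp ?_
    simpa using tendsto_inv_atTop_zero.add_const σ
  have hinv : Tendsto (fun t => (1 + σ * t)⁻¹) atTop (𝓝 0) :=
    (tendsto_atTop_add_const_left atTop 1 (tendsto_id.const_mul_atTop hσ)).inv_tendsto_atTop
  have H := (hlog.const_mul (-2)).add hinv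
  rw [add_zero] at H
  refine H.congr' ?_
  filter_upwards [eventually_gt_atTop 0] with t ht
  have hpos : 0 < 1 + σ * t := by positivity
  rw [show t⁻¹ + σ = (1 + σ * t) / t by field_simp, log_div hpos.ne' ht.ne', tailPrimitive]
  ring

lemma kernel_div_sq_nonneg (hσ : 0 ≤ σ) (ht : 0 ≤ t) : 0 ≤ kernel σ t / t ^ 2 :=
  div_nonneg (kernel_nonneg hσ ht) (sq_nonneg t)

lemma integrableOn_kernel_div_sq (hσ : 0 < σ) (hA : 0 < A) :
    IntegrableOn (fun t => kernel σ t / t ^ 2) (Ioi A) :=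
  integrableOn_Ioi_deriv_of_nonneg' (fun _ ht => hasDerivAt_tailPrimitive hσ.le (hA.trans_le ht))
    (fun _ ht => kernel_div_sq_nonneg hσ.le (hA.trans ht).le) (tendsto_tailPrimitive_atTop hσ)

lemma integral_kernel_div_sq (hσ : 0 < σ) (hA : 0 < A) :
    ∫ t in Ioi A, kernel σ t / t ^ 2 = -2 * log σ - tailPrimitive σ A :=
  integral_Ioi_of_hasDerivAt_of_nonneg'
    (fun _ ht => hasDerivAt_tailPrimitive hσ.le (hA.trans_le ht))
    (fun _ ht => kernel_div_sq_nonneg hσ.le (hA.trans ht).le) (tendsto_tailPrimitive_atTop hσ)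

lemma tendsto_tailPrimitive_nhdsGT_zero (A : ℝ) :
    Tendsto (tailPrimitive · A) (𝓝[>] 0) (𝓝 (2 * log A + 1)) := by
  have hcont : ContinuousAt (tailPrimitive · A) 0 := by
    unfold tailPrimitive
    fun_prop (disch := simp)
  simpa [tailPrimitive] using hcont.tendsto.mono_left nhdsWithin_le_nhds

lemma tendsto_add_mul_integral_kernel_div_sq_div_neg_log (hA : 0 < A) (b D : ℝ) :
    Tendsto (fun σ => (b + D * ∫ t in Ioi A, kernel σ t / t ^ 2) / -log σ) (𝓝[>] 0)
      (𝓝 (2 * D)) := by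
  have hinv : Tendsto (fun σ => (-log σ)⁻¹) (𝓝[>] 0) (𝓝 0) :=
    (tendsto_neg_atBot_atTop.comp tendsto_log_nhdsGT_zero).inv_tendsto_atTop
  have H := (((tendsto_tailPrimitive_nhdsGT_zero A).const_mul D).const_sub b).mul hinv
    |>.const_add (2 * D)
  rw [mul_zero, add_zero] at H
  refine H.congr' ?_
  filter_upwards [Ioo_mem_nhdsGT one_pos] with σ hσ
  have hlog : log σ ≠ 0 := (log_neg hσ.1 hσ.2).ne
  rw [integral_kernel_div_sq hσ.1 hA]
  field_simp
  ring

section Tail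

variable {F : ℝ → ℝ} {C D : ℝ}

lemma exists_forall_le_div_sq (hF : Tendsto (fun t => t ^ 2 * F t) atTop (𝓝 C)) (hCD : C < D) :
    ∃ A > 0, ∀ t ≥ A, F t ≤ D / t ^ 2 := by
  obtain ⟨A, hA⟩ := eventually_atTop.1 <|
    (hF.eventually (gt_mem_nhds hCD)).and (eventually_gt_atTop 0)
  refine ⟨max A 1, by positivity, fun t ht => ?_⟩
  obtain ⟨hlt, ht0⟩ := hA t (le_of_max_le_left ht)
  rw [le_div_iff₀ (by positivity)]
  linarith

lemma exists_forall_div_sq_le (hF : Tendsto (fun t => t ^ 2 * F t) atTop (𝓝 C)) (hDC : D < C) :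
    ∃ A > 0, ∀ t ≥ A, D / t ^ 2 ≤ F t := by
  obtain ⟨A, hA⟩ := eventually_atTop.1 <|
    (hF.eventually (lt_mem_nhds hDC)).and (eventually_gt_atTop 0)
  refine ⟨max A 1, by positivity, fun t ht => ?_⟩
  obtain ⟨hlt, ht0⟩ := hA t (le_of_max_le_left ht)
  rw [div_le_iff₀ (by positivity)]
  linarith

lemma integrableOn_Ioc_mul_kernel (hF_anti : Antitone F) (hF_nonneg : ∀ t, 0 ≤ F t)
    (hσ : 0 ≤ σ) (hA : 0 ≤ A) :
    IntegrableOn (fun t => F t * kernel σ t) (Ioc 0 A) := by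
  refine Integrable.mono' (((intervalIntegrable_kernel hσ hA).1).const_mul (F 0))
    (hF_anti.measurable.mul measurable_kernel).aestronglyMeasurable ?_
  filter_upwards [ae_restrict_mem measurableSet_Ioc] with t ht
  rw [norm_of_nonneg (mul_nonneg (hF_nonneg t) (kernel_nonneg hσ ht.1.le))]
  exact mul_le_mul_of_nonneg_right (hF_anti ht.1.le) (kernel_nonneg hσ ht.1.le)

lemma integrableOn_Ioi_mul_kernel (hF_meas : Measurable F) (hF_nonneg : ∀ t, 0 ≤ F t)
    (hσ : 0 < σ) (hA : 0 < A) (hFD : ∀ t ≥ A, F t ≤ D / t ^ 2) :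
    IntegrableOn (fun t => F t * kernel σ t) (Ioi A) := by
  refine Integrable.mono' ((integrableOn_kernel_div_sq hσ hA).const_mul D)
    (hF_meas.mul measurable_kernel).aestronglyMeasurable ?_
  filter_upwards [ae_restrict_mem measurableSet_Ioi] with t (ht : A < t)
  have hk := kernel_nonneg hσ.le (hA.trans ht).le
  rw [norm_of_nonneg (mul_nonneg (hF_nonneg t) hk)]
  exact (mul_le_mul_of_nonneg_right (hFD t ht.le) hk).trans_eq (by ring)

lemma integrableOn_Ioi_zero_mul_kernel (hF_anti : Antitone F) (hF_nonneg : ∀ t, 0 ≤ F t)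
    (hσ : 0 < σ) (hA : 0 < A) (hFD : ∀ t ≥ A, F t ≤ D / t ^ 2) :
    IntegrableOn (fun t => F t * kernel σ t) (Ioi 0) := by
  rw [← Ioc_union_Ioi_eq_Ioi hA.le]
  exact (integrableOn_Ioc_mul_kernel hF_anti hF_nonneg hσ.le hA.le).union
    (integrableOn_Ioi_mul_kernel hF_anti.measurable hF_nonneg hσ hA hFD)

lemma setIntegral_mul_kernel_le (hF_anti : Antitone F) (hF_nonneg : ∀ t, 0 ≤ F t)
    (hσ : 0 < σ) (hA : 0 < A) (hFD : ∀ t ≥ A, F t ≤ D / t ^ 2) :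
    ∫ t in Ioi 0, F t * kernel σ t ≤ F 0 * A ^ 2 + D * ∫ t in Ioi A, kernel σ t / t ^ 2 := by
  rw [← Ioc_union_Ioi_eq_Ioi hA.le, setIntegral_union (Ioc_disjoint_Ioi le_rfl) measurableSet_Ioi
    (integrableOn_Ioc_mul_kernel hF_anti hF_nonneg hσ.le hA.le)
    (integrableOn_Ioi_mul_kernel hF_anti.measurable hF_nonneg hσ hA hFD)]
  gcongr
  · calc ∫ t in Ioc 0 A, F t * kernel σ t
        ≤ ∫ t in Ioc 0 A, F 0 * kernel σ t := by
          refine setIntegral_mono_on (integrableOn_Ioc_mul_kernel hF_anti hF_nonneg hσ.le hA.le)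
            ((intervalIntegrable_kernel hσ.le hA.le).1.const_mul _) measurableSet_Ioc
            fun t ht => ?_
          exact mul_le_mul_of_nonneg_right (hF_anti ht.1.le) (kernel_nonneg hσ.le ht.1.le)
      _ = F 0 * (A ^ 2 / (1 + σ * A)) := by
          rw [integral_const_mul, ← intervalIntegral.integral_of_le hA.le,
            integral_kernel hσ.le hA.le]
      _ ≤ F 0 * A ^ 2 := by
          gcongr
          · exact hF_nonneg 0
          · exact div_le_self (sq_nonneg A) (by nlinarith)
  · rw [← integral_const_mul]
    refine setIntegral_mono_on
      (integrableOn_Ioi_mul_kernel hF_anti.measurable hF_nonneg hσ hA hFD)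
      ((integrableOn_kernel_div_sq hσ hA).const_mul D) measurableSet_Ioi fun t (ht : A < t) => ?_
    exact (mul_le_mul_of_nonneg_right (hFD t ht.le) (kernel_nonneg hσ.le (hA.trans ht).le)).trans_eq
      (by ring)

lemma mul_setIntegral_kernel_div_sq_le (hF_nonneg : ∀ t, 0 ≤ F t) (hσ : 0 < σ) (hA : 0 < A)
    (hFD : ∀ t ≥ A, D / t ^ 2 ≤ F t) (hint : IntegrableOn (fun t => F t * kernel σ t) (Ioi 0)) :
    D * ∫ t in Ioi A, kernel σ t / t ^ 2 ≤ ∫ t in Ioi 0, F t * kernel σ t :=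
  calc D * ∫ t in Ioi A, kernel σ t / t ^ 2
      = ∫ t in Ioi A, D * (kernel σ t / t ^ 2) := (integral_const_mul _ _).symm
    _ ≤ ∫ t in Ioi A, F t * kernel σ t := by
        refine setIntegral_mono_on ((integrableOn_kernel_div_sq hσ hA).const_mul D)
          (hint.mono_set (Ioi_subset_Ioi hA.le)) measurableSet_Ioi fun t (ht : A < t) => ?_
        exact (by ring : D * (kernel σ t / t ^ 2) = D / t ^ 2 * kernel σ t).trans_le
          (mul_le_mul_of_nonneg_right (hFD t ht.le) (kernel_nonneg hσ.le (hA.trans ht).le))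
    _ ≤ ∫ t in Ioi 0, F t * kernel σ t := by
        refine setIntegral_mono_set hint ?_ (Ioi_subset_Ioi hA.le).eventuallyLE
        filter_upwards [ae_restrict_mem measurableSet_Ioi] with t (ht : 0 < t)
        exact mul_nonneg (hF_nonneg t) (kernel_nonneg hσ.le ht.le)

theorem tendsto_setIntegral_mul_kernel_div_neg_log (hF_anti : Antitone F)
    (hF_nonneg : ∀ t, 0 ≤ F t) (hF : Tendsto (fun t => t ^ 2 * F t) atTop (𝓝 C)) :
    Tendsto (fun σ => (∫ t in Ioi 0, F t * kernel σ t) / -log σ) (𝓝[>] 0) (𝓝 (2 * C)) := by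
  have hlog : ∀ᶠ σ in 𝓝[>] (0 : ℝ), 0 < σ ∧ 0 < -log σ := by
    filter_upwards [Ioo_mem_nhdsGT one_pos] with σ hσ
    exact ⟨hσ.1, neg_pos.2 (log_neg hσ.1 hσ.2)⟩
  refine tendsto_order.2 ⟨fun a ha => ?_, fun b hb => ?_⟩
  · obtain ⟨D, haD, hDC⟩ := exists_between (show a / 2 < C by linarith)
    obtain ⟨A, hA, hFD⟩ := exists_forall_div_sq_le hF hDC
    obtain ⟨A', hA', hFD'⟩ := exists_forall_le_div_sq hF (lt_add_one C)
    have hlim := tendsto_add_mul_integral_kernel_div_sq_div_neg_log hA 0 D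
    filter_upwards [hlog, hlim.eventually_const_lt (show a < 2 * D by linarith)]
      with σ ⟨hσ, hσlog⟩ h
    refine h.trans_le (div_le_div_of_nonneg_right ?_ hσlog.le)
    rw [zero_add]
    exact mul_setIntegral_kernel_div_sq_le hF_nonneg hσ hA hFD
      (integrableOn_Ioi_zero_mul_kernel hF_anti hF_nonneg hσ hA' hFD')
  · obtain ⟨D, hCD, hDb⟩ := exists_between (show C < b / 2 by linarith)
    obtain ⟨A, hA, hFD⟩ := exists_forall_le_div_sq hF hCD
    have hlim := tendsto_add_mul_integral_kernel_div_sq_div_neg_log hA (F 0 * A ^ 2) D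
    filter_upwards [hlog, hlim.eventually_lt_const (show 2 * D < b by linarith)]
      with σ ⟨hσ, hσlog⟩ h
    exact (div_le_div_of_nonneg_right (setIntegral_mul_kernel_le hF_anti hF_nonneg hσ hA hFD)
      hσlog.le).trans_lt h

end Tail

end TailAsymptotics

open TailAsymptotics in
theorem tail_asymptotics_alpha_three_general
    {Ω : Type*} [MeasurableSpace Ω] (μ : Measure Ω) [IsProbabilityMeasure μ]
    (w : Ω → ℝ) (hw_meas : Measurable w) (hw_nonneg : ∀ ω, 0 ≤ w ω)
    (C : ℝ)
    (htail : Tendsto (fun x : ℝ => x ^ 2 * (μ {ω | x < w ω}).toReal)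
      atTop (𝓝 C)) :
    Tendsto (fun σ : ℝ => (∫ ω, (w ω) ^ 2 / (1 + σ * w ω) ∂μ) / (-Real.log σ))
      (𝓝[>] 0) (𝓝 (2 * C)) := by
  refine (tendsto_setIntegral_mul_kernel_div_neg_log (antitone_measureReal_lt w)
    (fun _ => measureReal_nonneg) htail).congr' ?_
  filter_upwards [self_mem_nhdsWithin] with σ (hσ : 0 < σ)
  rw [integral_comp_eq_setIntegral_measureReal_lt_mul_s7 hw_nonneg hw_meas (by fun_prop)
    measurable_kernel (fun _ => kernel_nonneg hσ.le)
    (fun _ ht => intervalIntegrable_kernel hσ.le ht.le) (fun _ => integral_kernel hσ.le)]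

/-- Let `w ≥ 0` with tail `P(w > x) ~ C x^{-2}` for some `C > 0`
(tail exponent `α = 3`). Then `E[w²/(1+σw)]/(−log σ) → 2C` as `σ → 0⁺`. -/
theorem tail_asymptotics_alpha_three
    {Ω : Type*} [MeasurableSpace Ω] (μ : Measure Ω) [IsProbabilityMeasure μ]
    (w : Ω → ℝ) (hw_meas : Measurable w) (hw_nonneg : ∀ ω, 0 ≤ w ω)
    (C : ℝ) (hC : 0 < C)
    (htail : Tendsto (fun x : ℝ => x ^ 2 * (μ {ω | x < w ω}).toReal)
      atTop (𝓝 C)) :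
    Tendsto (fun σ : ℝ => (∫ ω, (w ω) ^ 2 / (1 + σ * w ω) ∂μ) / (-Real.log σ))
      (𝓝[>] 0) (𝓝 (2 * C)) :=
  tail_asymptotics_alpha_three_general μ w hw_meas hw_nonneg C htail
end

section
/- Let w be a nonnegative real random variable and let C > 0 be such that lim_{x→∞} x³ P(w > x) = C (i.e. the tail exponent is α = 4). Then E[w²] < ∞ and lim_{σ→0⁺} (E[w²/(1+σw)] − E[w²]) / (σ log σ) = 3C. -/
/-!
Since `w² - w² / (1 + σw) = σ w³ / (1 + σw)`, the quotient equals `E[w³ / (1 + σw)] / (-log σ)`.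
By the layer-cake formula, `E[w³ / (1 + σw)] = ∫₀^∞ P(w > x) φ'(x) dx` with `φ(x) = x³ / (1 + σx)`.
Over `(0, A]` this is at most `A³`; for `x > A` one has `P(w > x) = (C ± δ) / x³`, and
`∫_A^∞ φ'(x) / x³ dx = 3 log ((1 + σA) / (σA)) - (1 + σA)⁻¹ = -3 log σ + O(1)`.
Finiteness of `E[w²]` follows from the same bound at `σ = 1`, as `w² ≤ 2 w³ / (1 + w) + 1`.
-/

open MeasureTheory Filter Real Set
open scoped Topology ENNReal

noncomputable def cubeDivDeriv (σ x : ℝ) : ℝ := (3 * x ^ 2 + 2 * σ * x ^ 3) / (1 + σ * x) ^ 2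

noncomputable def tailKernelIntegral (σ A : ℝ) : ℝ :=
  -(3 * log (σ * A / (1 + σ * A)) + (1 + σ * A)⁻¹)

lemma cubeDivDeriv_nonneg {σ x : ℝ} (hσ : 0 ≤ σ) (hx : 0 ≤ x) : 0 ≤ cubeDivDeriv σ x := by
  unfold cubeDivDeriv; positivity

lemma cubeDivDeriv_div_cube_nonneg {σ x : ℝ} (hσ : 0 ≤ σ) (hx : 0 ≤ x) :
    0 ≤ cubeDivDeriv σ x / x ^ 3 :=
  div_nonneg (cubeDivDeriv_nonneg hσ hx) (pow_nonneg hx 3)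

lemma hasDerivAt_cube_div_one_add_mul {σ x : ℝ} (hx : 1 + σ * x ≠ 0) :
    HasDerivAt (fun x => x ^ 3 / (1 + σ * x)) (cubeDivDeriv σ x) x := by
  have h := (hasDerivAt_pow 3 x).div (((hasDerivAt_id x).const_mul σ).const_add 1) hx
  refine h.congr_deriv ?_
  simp only [cubeDivDeriv, id]
  field_simp
  ring

lemma continuousOn_cubeDivDeriv {σ : ℝ} (hσ : 0 ≤ σ) : ContinuousOn (cubeDivDeriv σ) (Ici 0) :=
  ContinuousOn.div (by fun_prop) (by fun_prop) fun x hx =>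
    pow_ne_zero 2 (by have : 0 ≤ x := hx; positivity)

lemma intervalIntegrable_cubeDivDeriv {σ b : ℝ} (hσ : 0 ≤ σ) (hb : 0 ≤ b) :
    IntervalIntegrable (cubeDivDeriv σ) volume 0 b :=
  ((continuousOn_cubeDivDeriv hσ).mono Icc_subset_Ici_self).intervalIntegrable_of_Icc hb

lemma integral_cubeDivDeriv {σ b : ℝ} (hσ : 0 ≤ σ) (hb : 0 ≤ b) :
    ∫ x in 0..b, cubeDivDeriv σ x = b ^ 3 / (1 + σ * b) := by
  have hderiv : ∀ x ∈ uIcc 0 b, HasDerivAt (fun x => x ^ 3 / (1 + σ * x)) (cubeDivDeriv σ x) x :=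
    fun x hx => hasDerivAt_cube_div_one_add_mul <| by
      rw [uIcc_of_le hb] at hx; have := hx.1; positivity
  rw [intervalIntegral.integral_eq_sub_of_hasDerivAt hderiv
    (intervalIntegrable_cubeDivDeriv hσ hb)]
  simp

lemma hasDerivAt_neg_tailKernelIntegral {σ x : ℝ} (hσ : 0 < σ) (hx : 0 < x) :
    HasDerivAt (fun x => -tailKernelIntegral σ x) (cubeDivDeriv σ x / x ^ 3) x := by
  simp only [tailKernelIntegral, neg_neg]
  have hd : 0 < 1 + σ * x := by positivity
  have hlin := ((hasDerivAt_id x).const_mul σ).const_add 1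
  have hlog := (((hasDerivAt_id x).const_mul σ).div hlin hd.ne').log
    (by simp only [Pi.div_apply, id]; positivity)
  refine ((hlog.const_mul 3).add (hlin.inv hd.ne')).congr_deriv ?_
  simp only [cubeDivDeriv, Pi.div_apply, id]
  field_simp
  ring

lemma tendsto_tailKernelIntegral_atTop {σ : ℝ} (hσ : 0 < σ) :
    Tendsto (fun x => tailKernelIntegral σ x) atTop (𝓝 0) := by
  have hlin : Tendsto (fun x => 1 + σ * x) atTop atTop :=
    tendsto_atTop_add_const_left _ 1 (tendsto_id.const_mul_atTop hσ)
  have hratio : Tendsto (fun x => σ * x / (1 + σ * x)) atTop (𝓝 1) := by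
    have h := tendsto_const_nhds (x := (1 : ℝ)).sub hlin.inv_tendsto_atTop
    rw [sub_zero] at h
    refine h.congr' ?_
    filter_upwards [eventually_gt_atTop 0] with x hx
    simp only [Pi.inv_apply]
    field_simp
    ring
  simpa [tailKernelIntegral] using
    (((continuousAt_log one_ne_zero).tendsto.comp hratio).const_mul 3
      |>.add hlin.inv_tendsto_atTop).neg

lemma integrableOn_cubeDivDeriv_div_cube {σ A : ℝ} (hσ : 0 < σ) (hA : 0 < A) :
    IntegrableOn (fun x => cubeDivDeriv σ x / x ^ 3) (Ioi A) :=
  integrableOn_Ioi_deriv_of_nonneg'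
    (fun _ hx => hasDerivAt_neg_tailKernelIntegral hσ (hA.trans_le hx))
    (fun _ hx => cubeDivDeriv_div_cube_nonneg hσ.le (hA.trans hx).le)
    (tendsto_tailKernelIntegral_atTop hσ).neg

lemma integral_cubeDivDeriv_div_cube {σ A : ℝ} (hσ : 0 < σ) (hA : 0 < A) :
    ∫ x in Ioi A, cubeDivDeriv σ x / x ^ 3 = tailKernelIntegral σ A := by
  rw [integral_Ioi_of_hasDerivAt_of_nonneg'
    (fun _ hx => hasDerivAt_neg_tailKernelIntegral hσ (hA.trans_le hx))
    (fun _ hx => cubeDivDeriv_div_cube_nonneg hσ.le (hA.trans hx).le)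
    (tendsto_tailKernelIntegral_atTop hσ).neg, neg_zero, zero_sub, neg_neg]

lemma tailKernelIntegral_nonneg {σ A : ℝ} (hσ : 0 < σ) (hA : 0 < A) :
    0 ≤ tailKernelIntegral σ A := by
  rw [← integral_cubeDivDeriv_div_cube hσ hA]
  exact setIntegral_nonneg measurableSet_Ioi fun _ hx =>
    cubeDivDeriv_div_cube_nonneg hσ.le (hA.trans hx).le

lemma tendsto_neg_log_nhdsGT_zero : Tendsto (fun σ => -log σ) (𝓝[>] 0) atTop :=
  tendsto_neg_atBot_atTop.comp tendsto_log_nhdsGT_zero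

lemma tendsto_tailKernelIntegral_div_neg_log {A : ℝ} (hA : 0 < A) :
    Tendsto (fun σ => tailKernelIntegral σ A / -log σ) (𝓝[>] 0) (𝓝 3) := by
  set c : ℝ → ℝ := fun σ => 3 * log (1 + σ * A) - 3 * log A - (1 + σ * A)⁻¹
  have hc : Tendsto c (𝓝[>] 0) (𝓝 (c 0)) := by
    refine ContinuousAt.tendsto ?_ |>.mono_left nhdsWithin_le_nhds
    exact ((continuousAt_const.mul ((continuousAt_const.add (continuousAt_id.mul
      continuousAt_const)).log (by simp))).sub continuousAt_const).sub
      ((continuousAt_const.add (continuousAt_id.mul continuousAt_const)).inv₀ (by simp))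
  have h := (hc.div_atTop tendsto_neg_log_nhdsGT_zero).const_add 3
  rw [add_zero] at h
  refine h.congr' ?_
  filter_upwards [Ioo_mem_nhdsGT one_pos] with σ ⟨hσ0, hσ1⟩
  have hl : log σ ≠ 0 := (log_neg hσ0 hσ1).ne
  have hd : 0 < 1 + σ * A := by positivity
  rw [tailKernelIntegral, log_div (by positivity) hd.ne', log_mul hσ0.ne' hA.ne']
  simp only [c]
  field_simp
  ring

section TailBounds

variable {F : ℝ → ℝ} {σ A K M C : ℝ}

lemma lintegral_ofReal_mul_cubeDivDeriv_div_cube (hσ : 0 < σ) (hA : 0 < A) (hK : 0 ≤ K) :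
    ∫⁻ x in Ioi A, ENNReal.ofReal (K * (cubeDivDeriv σ x / x ^ 3)) =
      ENNReal.ofReal (K * tailKernelIntegral σ A) := by
  rw [← integral_cubeDivDeriv_div_cube hσ hA, ← integral_const_mul,
    ofReal_integral_eq_lintegral_ofReal ((integrableOn_cubeDivDeriv_div_cube hσ hA).const_mul K)]
  filter_upwards [ae_restrict_mem measurableSet_Ioi] with x hx
  exact mul_nonneg hK (cubeDivDeriv_div_cube_nonneg hσ.le (hA.trans hx).le)

lemma lintegral_ofReal_mul_cubeDivDeriv_le (hσ : 0 < σ) (hA : 0 < A) (hM : 0 ≤ M) (hK : 0 ≤ K)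
    (hFM : ∀ x, F x ≤ M) (hFK : ∀ x > A, F x ≤ K / x ^ 3) :
    ∫⁻ x in Ioi 0, ENNReal.ofReal (F x * cubeDivDeriv σ x) ≤
      ENNReal.ofReal (M * A ^ 3 + K * tailKernelIntegral σ A) := by
  rw [← Ioc_union_Ioi_eq_Ioi hA.le, lintegral_union measurableSet_Ioi Ioc_disjoint_Ioi_same,
    ENNReal.ofReal_add (by positivity) (mul_nonneg hK (tailKernelIntegral_nonneg hσ hA))]
  gcongr ?_ + ?_
  · calc ∫⁻ x in Ioc 0 A, ENNReal.ofReal (F x * cubeDivDeriv σ x)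
        ≤ ∫⁻ x in Ioc 0 A, ENNReal.ofReal (M * cubeDivDeriv σ x) :=
          setLIntegral_mono' measurableSet_Ioc fun x hx => ENNReal.ofReal_le_ofReal <|
            mul_le_mul_of_nonneg_right (hFM x) (cubeDivDeriv_nonneg hσ.le hx.1.le)
      _ = ENNReal.ofReal (M * (A ^ 3 / (1 + σ * A))) := by
          rw [← integral_cubeDivDeriv hσ.le hA.le, intervalIntegral.integral_of_le hA.le,
            ← integral_const_mul, ofReal_integral_eq_lintegral_ofReal
              ((intervalIntegrable_cubeDivDeriv hσ.le hA.le).1.const_mul M)]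
          filter_upwards [ae_restrict_mem measurableSet_Ioc] with x hx
          exact mul_nonneg hM (cubeDivDeriv_nonneg hσ.le hx.1.le)
      _ ≤ ENNReal.ofReal (M * A ^ 3) := by
          gcongr
          exact div_le_self (by positivity) (by simp only [le_add_iff_nonneg_right]; positivity)
  · calc ∫⁻ x in Ioi A, ENNReal.ofReal (F x * cubeDivDeriv σ x)
        ≤ ∫⁻ x in Ioi A, ENNReal.ofReal (K * (cubeDivDeriv σ x / x ^ 3)) :=
          setLIntegral_mono' measurableSet_Ioi fun x hx => ENNReal.ofReal_le_ofReal <| by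
            rw [← mul_div_assoc, ← div_mul_eq_mul_div]
            exact mul_le_mul_of_nonneg_right (hFK x hx)
              (cubeDivDeriv_nonneg hσ.le (hA.trans hx).le)
      _ = ENNReal.ofReal (K * tailKernelIntegral σ A) :=
          lintegral_ofReal_mul_cubeDivDeriv_div_cube hσ hA hK

lemma ofReal_mul_tailKernelIntegral_le (hσ : 0 < σ) (hA : 0 < A)
    (hFK : ∀ x > A, K / x ^ 3 ≤ F x) :
    ENNReal.ofReal (K * tailKernelIntegral σ A) ≤
      ∫⁻ x in Ioi 0, ENNReal.ofReal (F x * cubeDivDeriv σ x) := by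
  rcases le_or_gt K 0 with hK | hK
  · rw [ENNReal.ofReal_of_nonpos (mul_nonpos_of_nonpos_of_nonneg hK
      (tailKernelIntegral_nonneg hσ hA))]
    exact zero_le
  calc ENNReal.ofReal (K * tailKernelIntegral σ A)
      = ∫⁻ x in Ioi A, ENNReal.ofReal (K * (cubeDivDeriv σ x / x ^ 3)) :=
        (lintegral_ofReal_mul_cubeDivDeriv_div_cube hσ hA hK.le).symm
    _ ≤ ∫⁻ x in Ioi A, ENNReal.ofReal (F x * cubeDivDeriv σ x) :=
        setLIntegral_mono' measurableSet_Ioi fun x hx => ENNReal.ofReal_le_ofReal <| by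
          rw [← mul_div_assoc, ← div_mul_eq_mul_div]
          exact mul_le_mul_of_nonneg_right (hFK x hx)
            (cubeDivDeriv_nonneg hσ.le (hA.trans hx).le)
    _ ≤ ∫⁻ x in Ioi 0, ENNReal.ofReal (F x * cubeDivDeriv σ x) :=
        lintegral_mono_set (Ioi_subset_Ioi hA.le)

lemma exists_bounds_of_tendsto_cube_mul (hF : Tendsto (fun x => x ^ 3 * F x) atTop (𝓝 C))
    {δ : ℝ} (hδ : 0 < δ) : ∃ A > 0, ∀ x > A, (C - δ) / x ^ 3 ≤ F x ∧ F x ≤ (C + δ) / x ^ 3 := by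
  obtain ⟨N, hN⟩ := eventually_atTop.1 <|
    hF.eventually (Ioo_mem_nhds (sub_lt_self C hδ) (lt_add_of_pos_right C hδ))
  refine ⟨max N 1, by positivity, fun x hx => ?_⟩
  have hx3 : 0 < x ^ 3 := pow_pos (lt_of_lt_of_le one_pos (le_max_right N 1) |>.trans hx) 3
  obtain ⟨hlo, hhi⟩ := hN x ((le_max_left N 1).trans hx.le)
  exact ⟨(div_le_iff₀ hx3).2 (by linarith), (le_div_iff₀ hx3).2 (by linarith)⟩

lemma nonneg_of_tendsto_cube_mul (hF0 : ∀ x, 0 ≤ F x)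
    (hF : Tendsto (fun x => x ^ 3 * F x) atTop (𝓝 C)) : 0 ≤ C :=
  ge_of_tendsto hF <| (eventually_ge_atTop 0).mono fun x hx => mul_nonneg (pow_nonneg hx 3) (hF0 x)

end TailBounds

theorem tendsto_lintegral_ofReal_mul_cubeDivDeriv_div_neg_log {F : ℝ → ℝ} {M C : ℝ}
    (hF0 : ∀ x, 0 ≤ F x) (hFM : ∀ x, F x ≤ M)
    (hF : Tendsto (fun x => x ^ 3 * F x) atTop (𝓝 C)) :
    Tendsto (fun σ => (∫⁻ x in Ioi 0, ENNReal.ofReal (F x * cubeDivDeriv σ x)).toReal / -log σ)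
      (𝓝[>] 0) (𝓝 (3 * C)) := by
  have hM : 0 ≤ M := (hF0 0).trans (hFM 0)
  have hC := nonneg_of_tendsto_cube_mul hF0 hF
  have bounds : ∀ δ > 0, ∃ A > 0, ∀ᶠ σ in 𝓝[>] 0, 0 < -log σ ∧
      (C - δ) * tailKernelIntegral σ A ≤
        (∫⁻ x in Ioi 0, ENNReal.ofReal (F x * cubeDivDeriv σ x)).toReal ∧
      (∫⁻ x in Ioi 0, ENNReal.ofReal (F x * cubeDivDeriv σ x)).toReal ≤
        M * A ^ 3 + (C + δ) * tailKernelIntegral σ A := by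
    intro δ hδ
    obtain ⟨A, hA, hFA⟩ := exists_bounds_of_tendsto_cube_mul hF hδ
    refine ⟨A, hA, ?_⟩
    filter_upwards [Ioo_mem_nhdsGT one_pos] with σ ⟨hσ0, hσ1⟩
    have hupper := lintegral_ofReal_mul_cubeDivDeriv_le hσ0 hA hM (by linarith) hFM
      fun x hx => (hFA x hx).2
    refine ⟨neg_pos.mpr (log_neg hσ0 hσ1), ?_, ENNReal.toReal_le_of_le_ofReal ?_ hupper⟩
    · exact (ENNReal.ofReal_le_iff_le_toReal (ne_top_of_le_ne_top ENNReal.ofReal_ne_top hupper)).1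
        (ofReal_mul_tailKernelIntegral_le hσ0 hA fun x hx => (hFA x hx).1)
    · have := tailKernelIntegral_nonneg hσ0 hA
      positivity
  rw [tendsto_order]
  refine ⟨fun a ha => ?_, fun b hb => ?_⟩
  · obtain ⟨A, hA, hσ⟩ := bounds ((3 * C - a) / 6) (by linarith)
    have hlim := (tendsto_tailKernelIntegral_div_neg_log hA).const_mul (C - (3 * C - a) / 6)
    filter_upwards [hσ, hlim.eventually (lt_mem_nhds (by linarith : a < (C - (3 * C - a) / 6) * 3))]
      with σ ⟨hl, hlo, _⟩ hσa
    calc a < (C - (3 * C - a) / 6) * (tailKernelIntegral σ A / -log σ) := hσa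
      _ ≤ _ := by rw [← mul_div_assoc]; exact div_le_div_of_nonneg_right hlo hl.le
  · obtain ⟨A, hA, hσ⟩ := bounds ((b - 3 * C) / 6) (by linarith)
    have hlim := ((tendsto_const_nhds (x := M * A ^ 3)).div_atTop tendsto_neg_log_nhdsGT_zero).add
      ((tendsto_tailKernelIntegral_div_neg_log hA).const_mul (C + (b - 3 * C) / 6))
    filter_upwards [hσ, hlim.eventually
      (gt_mem_nhds (by linarith : 0 + (C + (b - 3 * C) / 6) * 3 < b))] with σ ⟨hl, _, hhi⟩ hσb
    calc _ ≤ (M * A ^ 3 + (C + (b - 3 * C) / 6) * tailKernelIntegral σ A) / -log σ :=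
          div_le_div_of_nonneg_right hhi hl.le
      _ = _ := by ring
      _ < b := hσb

section Tail

variable {Ω : Type*} [MeasurableSpace Ω] {μ : Measure Ω} {w : Ω → ℝ}

lemma lintegral_cube_div_eq_lintegral_tail [IsFiniteMeasure μ] (hw_meas : AEMeasurable w μ)
    (hw_nonneg : 0 ≤ᵐ[μ] w) {σ : ℝ} (hσ : 0 ≤ σ) :
    ∫⁻ ω, ENNReal.ofReal (w ω ^ 3 / (1 + σ * w ω)) ∂μ =
      ∫⁻ x in Ioi 0, ENNReal.ofReal (μ.real {ω | x < w ω} * cubeDivDeriv σ x) := by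
  have hlayer := lintegral_comp_eq_lintegral_meas_lt_mul μ hw_nonneg hw_meas
    (fun t ht => intervalIntegrable_cubeDivDeriv hσ ht.le)
    (ae_restrict_of_forall_mem measurableSet_Ioi fun t ht => cubeDivDeriv_nonneg hσ (le_of_lt ht))
  calc ∫⁻ ω, ENNReal.ofReal (w ω ^ 3 / (1 + σ * w ω)) ∂μ
      = ∫⁻ ω, ENNReal.ofReal (∫ t in 0..w ω, cubeDivDeriv σ t) ∂μ :=
        lintegral_congr_ae <| hw_nonneg.mono fun ω hω =>
          congrArg ENNReal.ofReal (integral_cubeDivDeriv hσ hω).symm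
    _ = _ := hlayer
    _ = _ := lintegral_congr fun x => by
        rw [ENNReal.ofReal_mul measureReal_nonneg, ofReal_measureReal]

lemma integrable_sq_of_lintegral_cube_div_ne_top [IsFiniteMeasure μ] (hw_meas : AEMeasurable w μ)
    (hw_nonneg : 0 ≤ᵐ[μ] w) (h : ∫⁻ ω, ENNReal.ofReal (w ω ^ 3 / (1 + w ω)) ∂μ ≠ ⊤) :
    Integrable (fun ω => w ω ^ 2) μ := by
  have hcube : Integrable (fun ω => w ω ^ 3 / (1 + w ω)) μ :=
    ⟨((hw_meas.pow_const 3).div (aemeasurable_const.add hw_meas)).aestronglyMeasurable,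
      (hasFiniteIntegral_iff_ofReal
        (hw_nonneg.mono fun ω (hω : 0 ≤ w ω) => by positivity)).2 h.lt_top⟩
  refine ((hcube.const_mul 2).add (integrable_const 1)).mono'
    (hw_meas.pow_const 2).aestronglyMeasurable ?_
  filter_upwards [hw_nonneg] with ω (hω : 0 ≤ w ω)
  rw [Pi.add_apply, Real.norm_of_nonneg (by positivity), ← sub_le_iff_le_add, mul_div_assoc',
    le_div_iff₀ (by positivity)]
  nlinarith [sq_nonneg (w ω - 1), mul_nonneg hω (sq_nonneg (w ω - 1))]

lemma integral_sq_div_sub_integral_sq (hw_int : Integrable (fun ω => w ω ^ 2) μ)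
    (hw_meas : AEMeasurable w μ) (hw_nonneg : 0 ≤ᵐ[μ] w) {σ : ℝ} (hσ : 0 ≤ σ) :
    ∫ ω, w ω ^ 2 / (1 + σ * w ω) ∂μ - ∫ ω, w ω ^ 2 ∂μ =
      -σ * (∫⁻ ω, ENNReal.ofReal (w ω ^ 3 / (1 + σ * w ω)) ∂μ).toReal := by
  have hden : AEMeasurable (fun ω => 1 + σ * w ω) μ := aemeasurable_const.add (hw_meas.const_mul σ)
  have hsq : Integrable (fun ω => w ω ^ 2 / (1 + σ * w ω)) μ := by
    refine hw_int.mono' ((hw_meas.pow_const 2).div hden).aestronglyMeasurable ?_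
    filter_upwards [hw_nonneg] with ω (hω : 0 ≤ w ω)
    rw [Real.norm_of_nonneg (by positivity)]
    exact div_le_self (by positivity) (by simp only [le_add_iff_nonneg_right]; positivity)
  have hcube : AEStronglyMeasurable (fun ω => w ω ^ 3 / (1 + σ * w ω)) μ :=
    ((hw_meas.pow_const 3).div hden).aestronglyMeasurable
  rw [← integral_sub hsq hw_int, ← integral_eq_lintegral_of_nonneg_ae
    (hw_nonneg.mono fun ω (hω : 0 ≤ w ω) => by positivity) hcube, ← integral_const_mul]
  refine integral_congr_ae (hw_nonneg.mono fun ω (hω : 0 ≤ w ω) => ?_)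
  have : 1 + σ * w ω ≠ 0 := by positivity
  field_simp
  ring

end Tail

theorem tail_asymptotics_alpha_four_general
    {Ω : Type*} [MeasurableSpace Ω] (μ : Measure Ω) [IsProbabilityMeasure μ]
    (w : Ω → ℝ) (hw_meas : Measurable w) (hw_nonneg : ∀ ω, 0 ≤ w ω)
    (C : ℝ)
    (htail : Tendsto (fun x : ℝ => x ^ 3 * (μ {ω | x < w ω}).toReal)
      atTop (𝓝 C)) :
    Integrable (fun ω => (w ω) ^ 2) μ ∧
    Tendsto (fun σ : ℝ =>
        ((∫ ω, (w ω) ^ 2 / (1 + σ * w ω) ∂μ) - ∫ ω, (w ω) ^ 2 ∂μ) /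
          (σ * Real.log σ))
      (𝓝[>] 0) (𝓝 (3 * C)) := by
  have hw : 0 ≤ᵐ[μ] w := ae_of_all μ hw_nonneg
  have hF0 : ∀ x : ℝ, 0 ≤ μ.real {ω | x < w ω} := fun _ => measureReal_nonneg
  have hF1 : ∀ x : ℝ, μ.real {ω | x < w ω} ≤ 1 := fun _ => measureReal_le_one
  have hlayer σ (hσ : 0 ≤ σ) := lintegral_cube_div_eq_lintegral_tail hw_meas.aemeasurable hw hσ
  have hint : Integrable (fun ω => w ω ^ 2) μ := by
    obtain ⟨A, hA, hFA⟩ := exists_bounds_of_tendsto_cube_mul htail one_pos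
    have hC := nonneg_of_tendsto_cube_mul hF0 htail
    have hfin := lintegral_ofReal_mul_cubeDivDeriv_le one_pos hA zero_le_one (by linarith) hF1
      fun x hx => (hFA x hx).2
    rw [← hlayer 1 zero_le_one] at hfin
    exact integrable_sq_of_lintegral_cube_div_ne_top hw_meas.aemeasurable hw
      (by simpa only [one_mul] using ne_top_of_le_ne_top ENNReal.ofReal_ne_top hfin)
  refine ⟨hint, (tendsto_lintegral_ofReal_mul_cubeDivDeriv_div_neg_log hF0 hF1 htail).congr' ?_⟩
  filter_upwards [Ioo_mem_nhdsGT one_pos] with σ ⟨hσ0, hσ1⟩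
  have hlog : log σ ≠ 0 := (log_neg hσ0 hσ1).ne
  rw [integral_sq_div_sub_integral_sq hint hw_meas.aemeasurable hw hσ0.le, hlayer σ hσ0.le]
  field_simp

/-- Let `w ≥ 0` with tail `P(w > x) ~ C x^{-3}` for some `C > 0`
(tail exponent `α = 4`). Then `E[w²] < ∞` and
`(E[w²/(1+σw)] − E[w²])/(σ log σ) → 3C` as `σ → 0⁺`. -/
theorem tail_asymptotics_alpha_four
    {Ω : Type*} [MeasurableSpace Ω] (μ : Measure Ω) [IsProbabilityMeasure μ]
    (w : Ω → ℝ) (hw_meas : Measurable w) (hw_nonneg : ∀ ω, 0 ≤ w ω)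
    (C : ℝ) (hC : 0 < C)
    (htail : Tendsto (fun x : ℝ => x ^ 3 * (μ {ω | x < w ω}).toReal)
      atTop (𝓝 C)) :
    Integrable (fun ω => (w ω) ^ 2) μ ∧
    Tendsto (fun σ : ℝ =>
        ((∫ ω, (w ω) ^ 2 / (1 + σ * w ω) ∂μ) - ∫ ω, (w ω) ^ 2 ∂μ) /
          (σ * Real.log σ))
      (𝓝[>] 0) (𝓝 (3 * C)) :=
  tail_asymptotics_alpha_four_general μ w hw_meas hw_nonneg C htail
end

section
/- Let w be a nonnegative real random variable and let C > 0 and α ∈ (2,3) be such that lim_{x→∞} x^{α−1} P(w > x) = C. Then for every δ > 0 there is a unique σ(δ) > 0 with δ·E[w²/(1+σ(δ)w)] = 1, and lim_{δ→0⁺} σ(δ) / δ^{1/(3−α)} = (Cπ(α−1)/sin(πα))^{1/(3−α)}. -/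
/-!
Write `G(σ) = E[w² / (1 + σ w)]`. As `t ↦ t² / (1 + σ t)` has derivative
`t (2 + σ t) / (1 + σ t)²`, the layer-cake formula and the substitution `t = u / σ` give
`σ^(3-α) G(σ) = ∫₀^∞ σ^(1-α) P(w > u / σ) · u (2 + u) / (1 + u)² du`. The tail hypothesis and
dominated convergence turn this into `σ^(3-α) G(σ) → C ∫₀^∞ u^(1-α) · u (2 + u) / (1 + u)² du`,
and the last integral is a sum of two Beta integrals, equal to `π (α - 1) / sin (π α)` by the
reflection formula. As `α - 1 > 1` the tail is integrable, so `E[w] < ∞` and `G` is continuous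
and strictly decreasing on `(0, ∞)`, with `G → ∞` at `0⁺` and `G → 0` at `∞`. Hence `δ G(σ) = 1`
has a unique root `σ(δ)`, which tends to `0` with `δ`, and
`σ(δ)^(3-α) / δ = σ(δ)^(3-α) G(σ(δ))` converges to the same constant.
-/

open MeasureTheory Filter Real Set
open scoped Topology

theorem integral_rpow_mul_one_sub_rpow {u v : ℝ} (hu : 0 < u) (hv : 0 < v) :
    ∫ x in (0:ℝ)..1, x ^ (u - 1) * (1 - x) ^ (v - 1) = Gamma u * Gamma v / Gamma (u + v) := by
  have hβ : Complex.betaIntegral u v =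
      ((∫ x in (0:ℝ)..1, x ^ (u - 1) * (1 - x) ^ (v - 1) : ℝ) : ℂ) := by
    rw [Complex.betaIntegral, ← intervalIntegral.integral_ofReal]
    refine intervalIntegral.integral_congr fun x hx => ?_
    rw [uIcc_of_le zero_le_one] at hx
    push_cast
    rw [Complex.ofReal_cpow hx.1, Complex.ofReal_cpow (sub_nonneg.2 hx.2)]
    push_cast
    rfl
  rw [← ProbabilityTheory.beta, ProbabilityTheory.beta_eq_betaIntegralReal u v hu hv, hβ,
    Complex.ofReal_re]

theorem integrableOn_Ioi_rpow_mul_one_add_rpow {p q : ℝ} (hp : -1 < p) (hpq : p + q < -1) :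
    IntegrableOn (fun u : ℝ => u ^ p * (1 + u) ^ q) (Ioi 0) := by
  have hq : q ≤ 0 := by linarith
  have hmeas : AEStronglyMeasurable (fun u : ℝ => u ^ p * (1 + u) ^ q) :=
    (by fun_prop : Measurable fun u : ℝ => u ^ p * (1 + u) ^ q).aestronglyMeasurable
  have near_zero : IntegrableOn (fun u : ℝ => u ^ p * (1 + u) ^ q) (Ioc 0 1) := by
    refine Integrable.mono' ((intervalIntegrable_iff_integrableOn_Ioc_of_le zero_le_one).1
      (intervalIntegral.intervalIntegrable_rpow' hp)) hmeas.restrict ?_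
    filter_upwards [ae_restrict_mem measurableSet_Ioc] with u hu
    have hu0 : 0 < u := hu.1
    rw [norm_of_nonneg (by positivity)]
    exact mul_le_of_le_one_right (by positivity)
      (rpow_le_one_of_one_le_of_nonpos (by linarith) hq)
  have near_top : IntegrableOn (fun u : ℝ => u ^ p * (1 + u) ^ q) (Ioi 1) := by
    refine Integrable.mono' (integrableOn_Ioi_rpow_of_lt hpq one_pos) hmeas.restrict ?_
    filter_upwards [ae_restrict_mem measurableSet_Ioi] with u (hu : 1 < u)
    rw [norm_of_nonneg (by positivity), rpow_add (by linarith)]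
    exact mul_le_mul_of_nonneg_left (rpow_le_rpow_of_nonpos (by linarith) (by linarith) hq)
      (by positivity)
  rw [← Ioc_union_Ioi_eq_Ioi zero_le_one]
  exact near_zero.union near_top

theorem image_div_one_sub_Ioo : (fun x : ℝ => x / (1 - x)) '' Ioo 0 1 = Ioi 0 := by
  ext y
  constructor
  · rintro ⟨x, ⟨hx0, hx1⟩, rfl⟩
    exact div_pos hx0 (by linarith)
  · intro (hy : 0 < y)
    refine ⟨y / (1 + y), ⟨by positivity, (div_lt_one (by linarith)).2 (by linarith)⟩, ?_⟩
    field_simp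
    ring

theorem integral_Ioi_rpow_mul_one_add_rpow_neg {s b : ℝ} (hs : 0 < s) (hsb : s < b) :
    ∫ u in Ioi (0:ℝ), u ^ (s - 1) * (1 + u) ^ (-b) = Gamma s * Gamma (b - s) / Gamma b := by
  have hderiv : ∀ x ∈ Ioo (0:ℝ) 1,
      HasDerivWithinAt (fun x => x / (1 - x)) ((1 - x) ^ 2)⁻¹ (Ioo 0 1) x := by
    intro x ⟨_, hx1⟩
    have h := (hasDerivAt_id' x).div ((hasDerivAt_id' x).const_sub 1) (sub_ne_zero.2 hx1.ne')
    rw [show (1 * (1 - x) - x * -1) / (1 - x) ^ 2 = ((1 - x) ^ 2)⁻¹ by ring] at h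
    exact h.hasDerivWithinAt
  have hinj : InjOn (fun x : ℝ => x / (1 - x)) (Ioo 0 1) := by
    intro x ⟨_, hx1⟩ y ⟨_, hy1⟩ h
    rw [div_eq_div_iff (by linarith) (by linarith)] at h
    linarith
  have hsubst : ∀ x ∈ Ioo (0:ℝ) 1, |((1 - x) ^ 2)⁻¹| • ((x / (1 - x)) ^ (s - 1) *
      (1 + x / (1 - x)) ^ (-b)) = x ^ (s - 1) * (1 - x) ^ (b - s - 1) := by
    intro x ⟨hx0, hx1⟩
    have h1x : 0 < 1 - x := by linarith
    rw [smul_eq_mul, abs_of_pos (by positivity),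
      show 1 + x / (1 - x) = (1 - x)⁻¹ by field_simp; ring, inv_rpow h1x.le, rpow_neg h1x.le,
      inv_inv, div_rpow hx0.le h1x.le,
      show b - s - 1 = b - (s - 1) - 2 by ring, rpow_sub h1x, rpow_sub h1x, rpow_two]
    field_simp
    rw [← rpow_add h1x, ← rpow_add h1x]
    ring_nf
  rw [← image_div_one_sub_Ioo,
    integral_image_eq_integral_abs_deriv_smul measurableSet_Ioo hderiv hinj,
    setIntegral_congr_fun measurableSet_Ioo hsubst,
    ← integral_Ioc_eq_integral_Ioo, ← intervalIntegral.integral_of_le zero_le_one,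
    integral_rpow_mul_one_sub_rpow hs (sub_pos.2 hsb), add_sub_cancel]

theorem rpow_mul_div_one_add_sq_eq {u : ℝ} (hu : 0 < u) (s : ℝ) :
    u ^ (s - 2) * (u * (2 + u) / (1 + u) ^ 2) =
      u ^ (s - 1) * (1 + u) ^ (-1 : ℝ) + u ^ (s - 1) * (1 + u) ^ (-2 : ℝ) := by
  have h1u : 0 < 1 + u := by linarith
  rw [rpow_neg h1u.le, rpow_neg h1u.le, rpow_one, rpow_two, rpow_sub_one hu.ne',
    rpow_sub hu, rpow_two]
  field_simp
  ring

theorem integrableOn_Ioi_rpow_mul_div_one_add_sq {α : ℝ} (h2 : 2 < α) (h3 : α < 3) :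
    IntegrableOn (fun u : ℝ => u ^ (1 - α) * (u * (2 + u) / (1 + u) ^ 2)) (Ioi 0) := by
  refine ((integrableOn_Ioi_rpow_mul_one_add_rpow (p := 2 - α) (q := -1) (by linarith)
    (by linarith)).add (integrableOn_Ioi_rpow_mul_one_add_rpow (p := 2 - α) (q := -2)
    (by linarith) (by linarith))).congr_fun (fun u (hu : 0 < u) => ?_) measurableSet_Ioi
  rw [show 1 - α = (3 - α) - 2 by ring, rpow_mul_div_one_add_sq_eq hu,
    show 3 - α - 1 = 2 - α by ring]
  rfl

theorem integral_Ioi_rpow_mul_div_one_add_sq {α : ℝ} (h2 : 2 < α) (h3 : α < 3) :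
    ∫ u in Ioi (0:ℝ), u ^ (1 - α) * (u * (2 + u) / (1 + u) ^ 2) = (α - 1) * π / sin (π * α) := by
  have hsin : sin (π * (3 - α)) = sin (π * α) := by
    rw [show π * (3 - α) = π - π * α + 2 * π by ring, sin_add_two_pi, sin_pi_sub]
  have hΓ : Gamma (α - 1) = (α - 2) * Gamma (α - 2) := by
    rw [show α - 1 = α - 2 + 1 by ring, Gamma_add_one (by linarith)]
  have hreflect := Gamma_mul_Gamma_one_sub (3 - α)
  rw [show 1 - (3 - α) = α - 2 by ring, hsin] at hreflect
  rw [setIntegral_congr_fun measurableSet_Ioi fun u (hu : 0 < u) => by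
      rw [show 1 - α = (3 - α) - 2 by ring, rpow_mul_div_one_add_sq_eq hu],
    integral_add (integrableOn_Ioi_rpow_mul_one_add_rpow (by linarith) (by linarith))
      (integrableOn_Ioi_rpow_mul_one_add_rpow (by linarith) (by linarith)),
    integral_Ioi_rpow_mul_one_add_rpow_neg (by linarith) (by linarith),
    integral_Ioi_rpow_mul_one_add_rpow_neg (by linarith) (by linarith),
    show (1:ℝ) - (3 - α) = α - 2 by ring, show (2:ℝ) - (3 - α) = α - 1 by ring,
    Gamma_one, Gamma_two, hΓ]
  linear_combination (α - 1) * hreflect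

theorem exists_abs_le_mul_rpow_neg_of_tendsto {F : ℝ → ℝ} {a C : ℝ}
    (hF : Tendsto (fun x => x ^ a * F x) atTop (𝓝 C)) :
    ∃ x₀ > 0, ∀ x ≥ x₀, |F x| ≤ (|C| + 1) * x ^ (-a) := by
  obtain ⟨x₁, hx₁⟩ := eventually_atTop.1 <| (hF.abs.eventually (gt_mem_nhds (lt_add_one |C|)))
  refine ⟨max x₁ 1, by positivity, fun x hx => ?_⟩
  have hx0 : 0 < x := by linarith [le_max_right x₁ 1]
  have hbound := (hx₁ x (le_of_max_le_left hx)).le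
  rw [abs_mul, abs_of_pos (rpow_pos_of_pos hx0 a), ← le_div_iff₀' (rpow_pos_of_pos hx0 a),
    div_eq_mul_inv, ← rpow_neg hx0.le] at hbound
  exact hbound

theorem integrableOn_Ioi_of_abs_le_mul_rpow_neg {F : ℝ → ℝ} {a B M x₀ : ℝ} (ha : 1 < a)
    (hx₀ : 0 < x₀) (hF_meas : Measurable F) (hF_bdd : ∀ t, |F t| ≤ M)
    (hF_tail : ∀ x ≥ x₀, |F x| ≤ B * x ^ (-a)) :
    IntegrableOn F (Ioi 0) := by
  rw [← Ioc_union_Ioi_eq_Ioi hx₀.le]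
  refine IntegrableOn.union ?_ ?_
  · exact Measure.integrableOn_of_bounded measure_Ioc_lt_top.ne hF_meas.aestronglyMeasurable
      (Eventually.of_forall hF_bdd)
  · refine Integrable.mono'
      ((integrableOn_Ioi_rpow_of_lt (a := -a) (by linarith) hx₀).const_mul B)
      hF_meas.aestronglyMeasurable ?_
    filter_upwards [ae_restrict_mem measurableSet_Ioi] with x (hx : x₀ < x)
    exact hF_tail x hx.le

theorem abs_rpow_neg_mul_comp_div_le {F : ℝ → ℝ} {a B M x₀ σ u : ℝ} (ha : 0 ≤ a)
    (hx₀ : 0 < x₀) (hF_bdd : ∀ t, |F t| ≤ M) (hF_tail : ∀ x ≥ x₀, |F x| ≤ B * x ^ (-a))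
    (hσ : 0 < σ) (hu : 0 < u) :
    |σ ^ (-a) * F (u / σ)| ≤ (M * x₀ ^ a + B) * u ^ (-a) := by
  have hM : 0 ≤ M := (abs_nonneg _).trans (hF_bdd 0)
  have hB : 0 ≤ B := nonneg_of_mul_nonneg_left ((abs_nonneg _).trans (hF_tail x₀ le_rfl))
    (rpow_pos_of_pos hx₀ _)
  have hσa : 0 < σ ^ (-a) := rpow_pos_of_pos hσ _
  rw [abs_mul, abs_of_pos hσa]
  rcases le_or_gt x₀ (u / σ) with hlarge | hsmall
  · calc σ ^ (-a) * |F (u / σ)| ≤ σ ^ (-a) * (B * (u / σ) ^ (-a)) :=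
          mul_le_mul_of_nonneg_left (hF_tail _ hlarge) hσa.le
      _ = B * u ^ (-a) := by
          rw [div_rpow hu.le hσ.le, rpow_neg hσ.le, rpow_neg hu.le]
          field_simp
      _ ≤ (M * x₀ ^ a + B) * u ^ (-a) := by
          gcongr
          exact le_add_of_nonneg_left (by positivity)
  · have hσ_ge : u / x₀ < σ := by rwa [div_lt_iff₀ hσ, mul_comm, ← div_lt_iff₀ hx₀] at hsmall
    calc σ ^ (-a) * |F (u / σ)| ≤ (u / x₀) ^ (-a) * M :=
          mul_le_mul (rpow_le_rpow_of_nonpos (by positivity) hσ_ge.le (by linarith))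
            (hF_bdd _) (abs_nonneg _) (by positivity)
      _ = M * x₀ ^ a * u ^ (-a) := by
          rw [div_rpow hu.le hx₀.le, rpow_neg hx₀.le, rpow_neg hu.le]
          field_simp
      _ ≤ (M * x₀ ^ a + B) * u ^ (-a) := by
          gcongr
          exact le_add_of_nonneg_right hB

theorem tendsto_integral_rpow_neg_mul_comp_div {F h : ℝ → ℝ} {a C M : ℝ} (ha : 0 ≤ a)
    (hF_meas : Measurable F) (hF_bdd : ∀ t, |F t| ≤ M)
    (hF : Tendsto (fun x => x ^ a * F x) atTop (𝓝 C)) (hh_meas : Measurable h)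
    (hh : IntegrableOn (fun u => u ^ (-a) * h u) (Ioi 0)) :
    Tendsto (fun σ => ∫ u in Ioi 0, σ ^ (-a) * F (u / σ) * h u) (𝓝[>] 0)
      (𝓝 (C * ∫ u in Ioi 0, u ^ (-a) * h u)) := by
  obtain ⟨x₀, hx₀, hF_tail⟩ := exists_abs_le_mul_rpow_neg_of_tendsto hF
  rw [← integral_const_mul]
  refine tendsto_integral_filter_of_dominated_convergence
    (fun u => (M * x₀ ^ a + (|C| + 1)) * ‖u ^ (-a) * h u‖) ?_ ?_ (hh.norm.const_mul _) ?_
  · exact Eventually.of_forall fun σ => by fun_prop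
  · filter_upwards [self_mem_nhdsWithin] with σ (hσ : 0 < σ)
    filter_upwards [ae_restrict_mem measurableSet_Ioi] with u (hu : 0 < u)
    rw [norm_mul, norm_mul (u ^ (-a)), norm_of_nonneg (rpow_pos_of_pos hu _).le, ← mul_assoc]
    exact mul_le_mul_of_nonneg_right
      (abs_rpow_neg_mul_comp_div_le ha hx₀ hF_bdd hF_tail hσ hu) (norm_nonneg _)
  · filter_upwards [ae_restrict_mem measurableSet_Ioi] with u (hu : 0 < u)
    have hdiv : Tendsto (fun σ => u / σ) (𝓝[>] 0) atTop :=
      tendsto_inv_nhdsGT_zero.const_mul_atTop hu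
    have hlim := ((hF.comp hdiv).const_mul (u ^ (-a))).mul_const (h u)
    rw [mul_right_comm, mul_comm _ C] at hlim
    refine hlim.congr' ?_
    filter_upwards [self_mem_nhdsWithin] with σ (hσ : 0 < σ)
    simp only [Function.comp_apply]
    rw [div_rpow hu.le hσ.le, rpow_neg hσ.le, rpow_neg hu.le]
    field_simp

theorem integral_mul_div_one_add_mul_sq_eq (F : ℝ → ℝ) {σ : ℝ} (hσ : 0 < σ) :
    ∫ t in Ioi 0, F t * (t * (2 + σ * t) / (1 + σ * t) ^ 2) =
      (σ ^ 2)⁻¹ * ∫ u in Ioi 0, F (u / σ) * (u * (2 + u) / (1 + u) ^ 2) := by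
  have := integral_comp_mul_left_Ioi (fun u => F (u / σ) * (u * (2 + u) / (1 + u) ^ 2)) 0 hσ
  rw [mul_zero, smul_eq_mul] at this
  rw [pow_two, mul_inv, mul_assoc, ← this, ← integral_const_mul]
  refine setIntegral_congr_fun measurableSet_Ioi fun t _ => ?_
  rw [mul_div_cancel_left₀ t hσ.ne']
  field_simp

theorem tendsto_atTop_of_tendsto_rpow_mul {G : ℝ → ℝ} {β K : ℝ} (hβ : 0 < β) (hK : 0 < K)
    (hG : Tendsto (fun σ => σ ^ β * G σ) (𝓝[>] 0) (𝓝 K)) :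
    Tendsto G (𝓝[>] 0) atTop := by
  refine ((tendsto_rpow_neg_nhdsGT_zero (neg_lt_zero.2 hβ)).atTop_mul_pos hK hG).congr' ?_
  filter_upwards [self_mem_nhdsWithin] with σ (hσ : 0 < σ)
  rw [← mul_assoc, ← rpow_add hσ, neg_add_cancel, rpow_zero, one_mul]

theorem existsUnique_mul_eq_one_of_strictAntiOn {G : ℝ → ℝ} (hG : StrictAntiOn G (Ioi 0))
    (hG_cont : ContinuousOn G (Ioi 0)) (hG_zero : Tendsto G (𝓝[>] 0) atTop)
    (hG_top : Tendsto G atTop (𝓝 0)) {δ : ℝ} (hδ : 0 < δ) :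
    ∃! σ, 0 < σ ∧ δ * G σ = 1 := by
  have hmul : ∀ σ, δ * G σ = 1 ↔ G σ = δ⁻¹ := fun σ =>
    ⟨eq_inv_of_mul_eq_one_right, fun h => h ▸ mul_inv_cancel₀ hδ.ne'⟩
  simp_rw [hmul]
  obtain ⟨a, ha, ha0 : 0 < a⟩ := ((hG_zero.eventually (eventually_ge_atTop δ⁻¹)).and
    self_mem_nhdsWithin).exists
  obtain ⟨b, hb, hab⟩ := ((hG_top.eventually (eventually_le_nhds (inv_pos.2 hδ))).and
    (eventually_ge_atTop a)).exists
  obtain ⟨σ, hσ, hσG⟩ := intermediate_value_Icc' hab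
    (hG_cont.mono fun x hx => ha0.trans_le hx.1) ⟨hb, ha⟩
  exact ⟨σ, ⟨ha0.trans_le hσ.1, hσG⟩, fun τ hτ => hG.injOn hτ.1 (ha0.trans_le hσ.1)
    (hτ.2.trans hσG.symm)⟩

theorem tendsto_nhdsGT_zero_of_mul_eq_one {G s : ℝ → ℝ} (hG : AntitoneOn G (Ioi 0))
    (hs : ∀ δ > 0, 0 < s δ ∧ δ * G (s δ) = 1) :
    Tendsto s (𝓝[>] 0) (𝓝[>] 0) := by
  refine tendsto_nhdsWithin_iff.2 ⟨tendsto_order.2 ⟨fun ε hε => ?_, fun ε hε => ?_⟩,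
    eventually_nhdsWithin_of_forall fun δ hδ => (hs δ hδ).1⟩
  · exact eventually_nhdsWithin_of_forall fun δ hδ => hε.trans (hs δ hδ).1
  · have hsmall : ∀ᶠ δ in 𝓝[>] (0:ℝ), δ * G ε < 1 :=
      (tendsto_nhdsWithin_of_tendsto_nhds
        (by simpa using (continuous_mul_const (G ε)).tendsto 0)).eventually
        (eventually_lt_nhds one_pos)
    filter_upwards [hsmall, self_mem_nhdsWithin] with δ hδε (hδ : 0 < δ)
    by_contra! hle
    have := mul_le_mul_of_nonneg_left (hG hε (hε.trans_le hle) hle) hδ.le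
    linarith [(hs δ hδ).2]

theorem tendsto_div_rpow_of_tendsto_rpow_mul {G s : ℝ → ℝ} {β K : ℝ} (hβ : β ≠ 0) (hK : 0 < K)
    (hG : Tendsto (fun σ => σ ^ β * G σ) (𝓝[>] 0) (𝓝 K))
    (hs0 : Tendsto s (𝓝[>] 0) (𝓝[>] 0)) (hs : ∀ δ > 0, 0 < s δ ∧ δ * G (s δ) = 1) :
    Tendsto (fun δ => s δ / δ ^ (1 / β)) (𝓝[>] 0) (𝓝 (K ^ (1 / β))) := by
  refine ((continuousAt_rpow_const K _ (Or.inl hK.ne')).tendsto.comp (hG.comp hs0)).congr' ?_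
  filter_upwards [self_mem_nhdsWithin] with δ (hδ : 0 < δ)
  obtain ⟨hsδ, hδG⟩ := hs δ hδ
  rw [Function.comp_apply, Function.comp_apply, eq_inv_of_mul_eq_one_right hδG,
    ← div_eq_mul_inv, div_rpow (by positivity) hδ.le, ← rpow_mul hsδ.le, mul_one_div_cancel hβ,
    rpow_one]

theorem sq_div_one_add_mul_le {x σ : ℝ} (hx : 0 ≤ x) (hσ : 0 < σ) :
    x ^ 2 / (1 + σ * x) ≤ σ⁻¹ * x := by
  rw [div_le_iff₀ (by positivity), inv_mul_eq_div, div_mul_eq_mul_div, le_div_iff₀ hσ]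
  nlinarith

section MeanField

variable {Ω : Type*} [MeasurableSpace Ω] {μ : Measure Ω} {f : Ω → ℝ}

theorem antitone_toReal_measure_lt [IsFiniteMeasure μ] (f : Ω → ℝ) :
    Antitone fun t => (μ {ω | t < f ω}).toReal := fun _ _ hst =>
  ENNReal.toReal_mono (measure_ne_top μ _) (measure_mono fun _ hω => hst.trans_lt hω)

theorem abs_toReal_measure_lt_le [IsFiniteMeasure μ] (f : Ω → ℝ) (t : ℝ) :
    |(μ {ω | t < f ω}).toReal| ≤ (μ univ).toReal :=
  (abs_of_nonneg ENNReal.toReal_nonneg).trans_le (measureReal_mono (subset_univ _))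

theorem integrable_of_tendsto_rpow_mul_toReal_measure_lt [IsFiniteMeasure μ]
    (hf : Measurable f) (hf_nn : ∀ ω, 0 ≤ f ω) {a C : ℝ} (ha : 1 < a)
    (htail : Tendsto (fun x => x ^ a * (μ {ω | x < f ω}).toReal) atTop (𝓝 C)) :
    Integrable f μ := by
  obtain ⟨x₀, hx₀, hF_tail⟩ := exists_abs_le_mul_rpow_neg_of_tendsto htail
  have hF_int := integrableOn_Ioi_of_abs_le_mul_rpow_neg ha hx₀
    (antitone_toReal_measure_lt f).measurable
    (abs_toReal_measure_lt_le f) hF_tail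
  rw [← lintegral_ofReal_ne_top_iff_integrable hf.aestronglyMeasurable (ae_of_all _ hf_nn),
    lintegral_eq_lintegral_meas_lt μ (ae_of_all _ hf_nn) hf.aemeasurable]
  rw [IntegrableOn, ← lintegral_ofReal_ne_top_iff_integrable hF_int.aestronglyMeasurable
    (ae_of_all _ fun _ => ENNReal.toReal_nonneg)] at hF_int
  simpa only [ENNReal.ofReal_toReal (measure_ne_top μ _)] using hF_int

theorem measure_pos_ne_zero_of_tendsto_rpow_mul_toReal_measure_lt [IsFiniteMeasure μ]
    {a C : ℝ} (hC : 0 < C)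
    (htail : Tendsto (fun x => x ^ a * (μ {ω | x < f ω}).toReal) atTop (𝓝 C)) :
    μ {ω | 0 < f ω} ≠ 0 := by
  obtain ⟨x, hx, hx0⟩ := ((htail.eventually (eventually_gt_nhds hC)).and
    (eventually_ge_atTop 0)).exists
  have hμx : μ {ω | x < f ω} ≠ 0 := fun h => by simp [h] at hx
  exact fun h => hμx (measure_mono_null (fun ω (hω : x < f ω) => hx0.trans_lt hω) h)

theorem integral_comp_eq_integral_meas_lt_mul [IsFiniteMeasure μ] {φ g : ℝ → ℝ}
    (hf : Measurable f) (hf_nn : ∀ ω, 0 ≤ f ω) (hφ : Measurable φ) (hg : Measurable g)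
    (hg_int : ∀ t > 0, IntervalIntegrable g volume 0 t) (hg_nn : ∀ t ≥ 0, 0 ≤ g t)
    (hφg : ∀ x ≥ 0, ∫ t in (0:ℝ)..x, g t = φ x) :
    ∫ ω, φ (f ω) ∂μ = ∫ t in Ioi 0, (μ {ω | t < f ω}).toReal * g t := by
  have hφ_nn : ∀ ω, 0 ≤ φ (f ω) := fun ω => hφg _ (hf_nn ω) ▸
    intervalIntegral.integral_nonneg (hf_nn ω) fun t ht => hg_nn t ht.1
  have hlayer := lintegral_comp_eq_lintegral_meas_lt_mul μ (Eventually.of_forall hf_nn)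
    hf.aemeasurable hg_int
    ((ae_restrict_mem measurableSet_Ioi).mono fun t ht => hg_nn t (le_of_lt ht))
  rw [integral_eq_lintegral_of_nonneg_ae (Eventually.of_forall hφ_nn)
      (hφ.comp hf).aestronglyMeasurable,
    integral_eq_lintegral_of_nonneg_ae
      ((ae_restrict_mem measurableSet_Ioi).mono fun t ht => mul_nonneg ENNReal.toReal_nonneg
        (hg_nn t (le_of_lt ht)))
      ((antitone_toReal_measure_lt f).measurable.mul hg).aestronglyMeasurable]
  congr 1
  rw [← setLIntegral_congr_fun measurableSet_Ioi fun t ht => by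
      rw [ENNReal.ofReal_mul ENNReal.toReal_nonneg, ENNReal.ofReal_toReal (measure_ne_top μ _)],
    ← hlayer]
  exact lintegral_congr fun ω => by rw [hφg _ (hf_nn ω)]

theorem integral_sq_div_one_add_mul_eq [IsFiniteMeasure μ] (hf : Measurable f)
    (hf_nn : ∀ ω, 0 ≤ f ω) {σ : ℝ} (hσ : 0 < σ) :
    ∫ ω, f ω ^ 2 / (1 + σ * f ω) ∂μ =
      ∫ t in Ioi 0, (μ {ω | t < f ω}).toReal * (t * (2 + σ * t) / (1 + σ * t) ^ 2) := by
  have hpos : ∀ t ≥ 0, 0 < 1 + σ * t := fun t ht => by positivity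
  have hcont : ContinuousOn (fun t => t * (2 + σ * t) / (1 + σ * t) ^ 2) (Ici 0) :=
    ContinuousOn.div (by fun_prop) (by fun_prop) fun t ht => (pow_pos (hpos t ht) 2).ne'
  have hg_int : ∀ x ≥ 0, IntervalIntegrable (fun t => t * (2 + σ * t) / (1 + σ * t) ^ 2)
      volume 0 x := fun x hx =>
    (hcont.mono (by rw [uIcc_of_le hx]; exact Icc_subset_Ici_self)).intervalIntegrable
  refine integral_comp_eq_integral_meas_lt_mul (φ := fun x => x ^ 2 / (1 + σ * x)) hf hf_nn
    (by fun_prop) (by fun_prop) (fun t ht => hg_int t ht.le)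
    (fun t ht => by have := hpos t ht; positivity) fun x hx => ?_
  rw [intervalIntegral.integral_eq_sub_of_hasDerivAt (f := fun x => x ^ 2 / (1 + σ * x))
    (fun t ht => ?_) (hg_int x hx)]
  · simp
  · rw [uIcc_of_le hx] at ht
    have h := (hasDerivAt_pow 2 t).div ((hasDerivAt_id' t).const_mul σ |>.const_add 1)
      (hpos t ht.1).ne'
    exact h.congr_deriv (by push_cast; ring)

theorem tendsto_rpow_mul_integral_sq_div_one_add_mul [IsFiniteMeasure μ]
    (hf : Measurable f) (hf_nn : ∀ ω, 0 ≤ f ω) {C α : ℝ} (h2 : 2 < α) (h3 : α < 3)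
    (htail : Tendsto (fun x => x ^ (α - 1) * (μ {ω | x < f ω}).toReal) atTop (𝓝 C)) :
    Tendsto (fun σ => σ ^ (3 - α) * ∫ ω, f ω ^ 2 / (1 + σ * f ω) ∂μ) (𝓝[>] 0)
      (𝓝 (C * ((α - 1) * π / sin (π * α)))) := by
  have hneg : -(α - 1) = 1 - α := by ring
  have habel := tendsto_integral_rpow_neg_mul_comp_div (by linarith)
    (antitone_toReal_measure_lt f).measurable
    (abs_toReal_measure_lt_le f) htail
    (by fun_prop) (hneg ▸ integrableOn_Ioi_rpow_mul_div_one_add_sq h2 h3)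
  rw [hneg, integral_Ioi_rpow_mul_div_one_add_sq h2 h3] at habel
  refine habel.congr' ?_
  filter_upwards [self_mem_nhdsWithin] with σ (hσ : 0 < σ)
  have hpow : σ ^ (3 - α) * (σ ^ 2)⁻¹ = σ ^ (1 - α) := by
    rw [← div_eq_mul_inv, ← rpow_natCast, ← rpow_sub hσ]
    congr 1
    push_cast
    ring
  rw [integral_sq_div_one_add_mul_eq hf hf_nn hσ, integral_mul_div_one_add_mul_sq_eq _ hσ,
    ← mul_assoc, hpow, ← integral_const_mul]
  simp_rw [mul_assoc]

theorem integrable_sq_div_one_add_mul (hf : Measurable f) (hf_nn : ∀ ω, 0 ≤ f ω)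
    (hf_int : Integrable f μ) {σ : ℝ} (hσ : 0 < σ) :
    Integrable (fun ω => f ω ^ 2 / (1 + σ * f ω)) μ :=
  (hf_int.const_mul σ⁻¹).mono' (by fun_prop : Measurable _).aestronglyMeasurable
    (Eventually.of_forall fun ω => by
      rw [norm_of_nonneg (by have := hf_nn ω; positivity)]
      exact sq_div_one_add_mul_le (hf_nn ω) hσ)

theorem integral_sq_div_one_add_mul_le (hf : Measurable f) (hf_nn : ∀ ω, 0 ≤ f ω)
    (hf_int : Integrable f μ) {σ : ℝ} (hσ : 0 < σ) :
    ∫ ω, f ω ^ 2 / (1 + σ * f ω) ∂μ ≤ σ⁻¹ * ∫ ω, f ω ∂μ := by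
  rw [← integral_const_mul]
  exact integral_mono (integrable_sq_div_one_add_mul hf hf_nn hf_int hσ) (hf_int.const_mul _)
    fun ω => sq_div_one_add_mul_le (hf_nn ω) hσ

theorem tendsto_integral_sq_div_one_add_mul_atTop (hf : Measurable f)
    (hf_nn : ∀ ω, 0 ≤ f ω) (hf_int : Integrable f μ) :
    Tendsto (fun σ => ∫ ω, f ω ^ 2 / (1 + σ * f ω) ∂μ) atTop (𝓝 0) := by
  have hbound : Tendsto (fun σ : ℝ => σ⁻¹ * ∫ ω, f ω ∂μ) atTop (𝓝 0) := by
    simpa using tendsto_inv_atTop_zero.mul_const (∫ ω, f ω ∂μ)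
  refine tendsto_of_tendsto_of_tendsto_of_le_of_le' tendsto_const_nhds hbound ?_ ?_
  · filter_upwards [eventually_gt_atTop 0] with σ hσ
    exact integral_nonneg fun ω => by have := hf_nn ω; positivity
  · filter_upwards [eventually_gt_atTop 0] with σ hσ
    exact integral_sq_div_one_add_mul_le hf hf_nn hf_int hσ

theorem continuousOn_integral_sq_div_one_add_mul (hf : Measurable f) (hf_nn : ∀ ω, 0 ≤ f ω)
    (hf_int : Integrable f μ) :
    ContinuousOn (fun σ => ∫ ω, f ω ^ 2 / (1 + σ * f ω) ∂μ) (Ioi 0) := by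
  intro σ₀ (hσ₀ : 0 < σ₀)
  refine ContinuousAt.continuousWithinAt (continuousAt_of_dominated
    (bound := fun ω => (σ₀ / 2)⁻¹ * f ω) (Eventually.of_forall fun σ => ?_) ?_
    (hf_int.const_mul _) (Eventually.of_forall fun ω => ?_))
  · exact (by fun_prop : Measurable _).aestronglyMeasurable
  · filter_upwards [eventually_gt_nhds (half_lt_self hσ₀)] with σ hσ
    refine Eventually.of_forall fun ω => ?_
    have hσ0 : 0 < σ := (half_pos hσ₀).trans hσ
    rw [norm_of_nonneg (by have := hf_nn ω; positivity)]
    exact (sq_div_one_add_mul_le (hf_nn ω) hσ0).trans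
      (mul_le_mul_of_nonneg_right (inv_anti₀ (half_pos hσ₀) hσ.le) (hf_nn ω))
  · have := hf_nn ω
    exact continuousAt_const.div (by fun_prop) (by positivity)

theorem strictAntiOn_integral_sq_div_one_add_mul (hf : Measurable f) (hf_nn : ∀ ω, 0 ≤ f ω)
    (hf_int : Integrable f μ) (hpos : μ {ω | 0 < f ω} ≠ 0) :
    StrictAntiOn (fun σ => ∫ ω, f ω ^ 2 / (1 + σ * f ω) ∂μ) (Ioi 0) := by
  intro σ (hσ : 0 < σ) τ (hτ : 0 < τ) hστ
  have hint_σ := integrable_sq_div_one_add_mul hf hf_nn hf_int hσ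
  have hint_τ := integrable_sq_div_one_add_mul hf hf_nn hf_int hτ
  have hle : ∀ ω, f ω ^ 2 / (1 + τ * f ω) ≤ f ω ^ 2 / (1 + σ * f ω) := fun ω => by
    have := hf_nn ω
    gcongr
  rw [← sub_pos, ← integral_sub hint_σ hint_τ,
    integral_pos_iff_support_of_nonneg (fun ω => sub_nonneg.2 (hle ω)) (hint_σ.sub hint_τ)]
  refine (pos_iff_ne_zero.2 hpos).trans_le (measure_mono fun ω (hω : 0 < f ω) => ?_)
  refine sub_ne_zero.2 (ne_of_gt ?_)
  gcongr

end MeanField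

/-- Let `w ≥ 0` with tail `P(w > x) ~ C x^{-(α-1)}`, `C > 0`,
`α ∈ (2,3)`. Then for every `δ > 0` there is a unique `σ(δ) > 0` with
`δ·E[w²/(1+σ(δ)w)] = 1`, and
`σ(δ)/δ^{1/(3−α)} → (Cπ(α−1)/sin(πα))^{1/(3−α)}` as `δ → 0⁺`. -/
theorem critical_exponent_alpha_two_three
    {Ω : Type*} [MeasurableSpace Ω] (μ : Measure Ω) [IsProbabilityMeasure μ]
    (w : Ω → ℝ) (hw_meas : Measurable w) (hw_nonneg : ∀ ω, 0 ≤ w ω)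
    (C α : ℝ) (hC : 0 < C) (hα : α ∈ Set.Ioo (2 : ℝ) 3)
    (htail : Tendsto (fun x : ℝ => x ^ (α - 1) * (μ {ω | x < w ω}).toReal)
      atTop (𝓝 C)) :
    (∀ δ : ℝ, 0 < δ →
      ∃! σ : ℝ, 0 < σ ∧ δ * ∫ ω, (w ω) ^ 2 / (1 + σ * w ω) ∂μ = 1) ∧
    ∀ sf : ℝ → ℝ,
      (∀ δ : ℝ, 0 < δ →
        0 < sf δ ∧ δ * ∫ ω, (w ω) ^ 2 / (1 + sf δ * w ω) ∂μ = 1) →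
      Tendsto (fun δ : ℝ => sf δ / δ ^ (1 / (3 - α)))
        (𝓝[>] 0)
        (𝓝 ((C * Real.pi * (α - 1) / Real.sin (Real.pi * α)) ^ (1 / (3 - α)))) := by
  obtain ⟨hα2, hα3⟩ := hα
  have hsin : 0 < sin (π * α) := by
    rw [show π * α = π * α - 2 * π + 2 * π by ring, sin_add_two_pi]
    exact sin_pos_of_pos_of_lt_pi (by nlinarith [pi_pos]) (by nlinarith [pi_pos])
  have hK : 0 < C * ((α - 1) * π / sin (π * α)) :=
    mul_pos hC (div_pos (mul_pos (by linarith) pi_pos) hsin)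
  have hw_int := integrable_of_tendsto_rpow_mul_toReal_measure_lt hw_meas hw_nonneg
    (by linarith) htail
  have hasymp := tendsto_rpow_mul_integral_sq_div_one_add_mul hw_meas hw_nonneg hα2 hα3 htail
  have hanti := strictAntiOn_integral_sq_div_one_add_mul hw_meas hw_nonneg hw_int
    (measure_pos_ne_zero_of_tendsto_rpow_mul_toReal_measure_lt hC htail)
  refine ⟨fun δ hδ => existsUnique_mul_eq_one_of_strictAntiOn hanti
    (continuousOn_integral_sq_div_one_add_mul hw_meas hw_nonneg hw_int)
    (tendsto_atTop_of_tendsto_rpow_mul (by linarith) hK hasymp)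
    (tendsto_integral_sq_div_one_add_mul_atTop hw_meas hw_nonneg hw_int) hδ, fun sf hsf => ?_⟩
  rw [show C * π * (α - 1) / sin (π * α) = C * ((α - 1) * π / sin (π * α)) by ring]
  exact tendsto_div_rpow_of_tendsto_rpow_mul (by linarith) hK hasymp
    (tendsto_nhdsGT_zero_of_mul_eq_one hanti.antitoneOn hsf) hsf
end

section
/- Let w be a nonnegative real random variable with P(w > 0) > 0 and E[w³] < ∞. Set λ_c = 1/E[w²]. Then for every δ > 0 there is a unique σ(λ_c+δ) > 0 with (λ_c+δ)·E[w²/(1+σ(λ_c+δ)w)] = 1, and lim_{δ→0⁺} σ(λ_c+δ)/δ = 1/(λ_c² E[w³]). -/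
open MeasureTheory Filter Real Set
open scoped Topology

/-!
Write `R k σ = E[w^k / (1 + σ w)]` (`resolventMoment`), so the equation reads
`R 2 σ = 1 / (λ_c + δ)` and `R 2 0 = 1 / λ_c`. By dominated convergence `R 2` is continuous on
`[0, ∞)` and vanishes at infinity, and it is strictly decreasing because `w > 0` with positive
probability; the intermediate value theorem gives the unique root. The identity
`R k 0 - R k σ = σ R (k+1) σ` turns `δ = 1 / R 2 σ - 1 / R 2 0` into
`σ / δ = R 2 σ · R 2 0 / R 3 σ`; monotonicity forces `σ → 0` as `δ → 0⁺`, so the ratio tends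
to `R 2 0 ^ 2 / R 3 0 = 1 / (λ_c² E[w³])`.
-/

theorem integrable_pow_of_le {Ω : Type*} [MeasurableSpace Ω] {μ : Measure Ω}
    [IsFiniteMeasure μ] {w : Ω → ℝ} (hw : AEStronglyMeasurable w μ) {m n : ℕ}
    (hm : Integrable (fun ω => w ω ^ m) μ) (hnm : n ≤ m) :
    Integrable (fun ω => w ω ^ n) μ := by
  refine ((integrable_const 1).add hm.norm).mono' (hw.pow n) (.of_forall fun ω => ?_)
  simp only [Pi.add_apply, norm_pow, Real.norm_eq_abs]
  rcases le_total |w ω| 1 with h | h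
  · linarith [pow_le_one₀ (abs_nonneg (w ω)) h (n := n), pow_nonneg (abs_nonneg (w ω)) m]
  · linarith [pow_le_pow_right₀ h hnm]

theorem integral_pos_of_pos_on {Ω : Type*} [MeasurableSpace Ω] {μ : Measure Ω}
    {f : Ω → ℝ} {s : Set Ω} (hf : 0 ≤ f) (hfi : Integrable f μ) (hs : 0 < μ s)
    (hpos : ∀ ω ∈ s, 0 < f ω) : 0 < ∫ ω, f ω ∂μ := by
  rw [integral_pos_iff_support_of_nonneg hf hfi]
  exact hs.trans_le (measure_mono fun ω hω => (hpos ω hω).ne')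

theorem existsUnique_pos_apply_eq {f : ℝ → ℝ} (hcont : ContinuousOn f (Ici 0))
    (hanti : StrictAntiOn f (Ici 0)) (hlim : Tendsto f atTop (𝓝 0)) {t : ℝ}
    (ht : 0 < t) (htf : t < f 0) : ∃! σ, 0 < σ ∧ f σ = t := by
  obtain ⟨M, hMt, hM0⟩ :=
    ((hlim.eventually (gt_mem_nhds ht)).and (eventually_ge_atTop 0)).exists
  obtain ⟨σ, hσ, hσt⟩ := intermediate_value_Icc' hM0 (hcont.mono Icc_subset_Ici_self)
    ⟨hMt.le, htf.le⟩
  have hσ0 : σ ≠ 0 := by rintro rfl; exact htf.ne' hσt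
  refine ⟨σ, ⟨lt_of_le_of_ne hσ.1 hσ0.symm, hσt⟩, fun τ hτ => ?_⟩
  exact hanti.injOn (mem_Ici.2 hτ.1.le) (mem_Ici.2 hσ.1) (hτ.2.trans hσt.symm)

theorem tendsto_nhdsGE_of_strictAntiOn {ι : Type*} {l : Filter ι} {f : ℝ → ℝ}
    (hanti : StrictAntiOn f (Ici 0)) {s : ι → ℝ} (hs : ∀ᶠ x in l, 0 ≤ s x)
    (hfs : Tendsto (fun x => f (s x)) l (𝓝 (f 0))) : Tendsto s l (𝓝[≥] 0) := by
  refine tendsto_nhdsWithin_iff.2 ⟨tendsto_order.2 ⟨fun a ha => ?_, fun ε hε => ?_⟩, hs⟩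
  · filter_upwards [hs] with x hx using ha.trans_le hx
  · have hfε : f ε < f 0 := hanti self_mem_Ici (mem_Ici.2 hε.le) hε
    filter_upwards [hs, hfs.eventually (lt_mem_nhds hfε)] with x hx hfx
    exact (hanti.lt_iff_gt (mem_Ici.2 hε.le) hx).1 hfx

theorem norm_pow_div_one_add_mul_le {x σ : ℝ} (hx : 0 ≤ x) (hσ : 0 ≤ σ) (k : ℕ) :
    ‖x ^ k / (1 + σ * x)‖ ≤ x ^ k := by
  have hden : 1 ≤ 1 + σ * x := le_add_of_nonneg_right (mul_nonneg hσ hx)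
  rw [Real.norm_of_nonneg (by positivity)]
  exact div_le_self (pow_nonneg hx k) hden

section ResolventMoment

variable {Ω : Type*} [MeasurableSpace Ω] {μ : Measure Ω} {w : Ω → ℝ}

noncomputable def resolventMoment (μ : Measure Ω) (w : Ω → ℝ) (k : ℕ) (σ : ℝ) : ℝ :=
  ∫ ω, w ω ^ k / (1 + σ * w ω) ∂μ

@[simp]
theorem resolventMoment_zero (k : ℕ) : resolventMoment μ w k 0 = ∫ ω, w ω ^ k ∂μ := by
  simp [resolventMoment]

theorem integrable_pow_div_one_add_mul (hw : Measurable w) (hw0 : ∀ ω, 0 ≤ w ω) {k : ℕ}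
    (hk : Integrable (fun ω => w ω ^ k) μ) {σ : ℝ} (hσ : 0 ≤ σ) :
    Integrable (fun ω => w ω ^ k / (1 + σ * w ω)) μ :=
  hk.mono' (Measurable.aestronglyMeasurable (by fun_prop))
    (.of_forall fun ω => norm_pow_div_one_add_mul_le (hw0 ω) hσ k)

theorem continuousOn_resolventMoment (hw : Measurable w) (hw0 : ∀ ω, 0 ≤ w ω) {k : ℕ}
    (hk : Integrable (fun ω => w ω ^ k) μ) : ContinuousOn (resolventMoment μ w k) (Ici 0) := by
  intro σ₀ hσ₀
  refine continuousWithinAt_of_dominated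
    (.of_forall fun σ => Measurable.aestronglyMeasurable (by fun_prop)) ?_ hk
    (.of_forall fun ω => ?_)
  · filter_upwards [self_mem_nhdsWithin] with σ hσ
    exact .of_forall fun ω => norm_pow_div_one_add_mul_le (hw0 ω) hσ k
  · have hden : 1 + σ₀ * w ω ≠ 0 := by nlinarith [hw0 ω, mem_Ici.1 hσ₀]
    exact (continuousAt_const.div (continuousAt_const.add (continuousAt_id.mul continuousAt_const))
      hden).continuousWithinAt

theorem tendsto_resolventMoment_atTop (hw : Measurable w) (hw0 : ∀ ω, 0 ≤ w ω) {k : ℕ}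
    (hk0 : k ≠ 0) (hk : Integrable (fun ω => w ω ^ k) μ) :
    Tendsto (resolventMoment μ w k) atTop (𝓝 0) := by
  have hlim : ∀ ω, Tendsto (fun σ => w ω ^ k / (1 + σ * w ω)) atTop (𝓝 0) := by
    intro ω
    rcases (hw0 ω).eq_or_lt with h | h
    · simp [← h, hk0]
    · exact tendsto_const_nhds.div_atTop
        (tendsto_atTop_add_const_left _ _ (tendsto_id.atTop_mul_const h))
  have h := tendsto_integral_filter_of_dominated_convergence _
    (.of_forall fun σ => Measurable.aestronglyMeasurable (by fun_prop))
    ((eventually_ge_atTop 0).mono fun σ hσ =>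
      .of_forall fun ω => norm_pow_div_one_add_mul_le (hw0 ω) hσ k) hk (.of_forall hlim)
  rwa [integral_zero] at h

theorem resolventMoment_pos (hw : Measurable w) (hw0 : ∀ ω, 0 ≤ w ω)
    (hpos : 0 < μ {ω | 0 < w ω}) {k : ℕ} (hk : Integrable (fun ω => w ω ^ k) μ) {σ : ℝ}
    (hσ : 0 ≤ σ) : 0 < resolventMoment μ w k σ :=
  integral_pos_of_pos_on (fun ω => by have := hw0 ω; positivity)
    (integrable_pow_div_one_add_mul hw hw0 hk hσ) hpos fun ω (hω : 0 < w ω) => by positivity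

theorem strictAntiOn_resolventMoment (hw : Measurable w) (hw0 : ∀ ω, 0 ≤ w ω)
    (hpos : 0 < μ {ω | 0 < w ω}) {k : ℕ} (hk : Integrable (fun ω => w ω ^ k) μ) :
    StrictAntiOn (resolventMoment μ w k) (Ici 0) := by
  intro a ha b hb hab
  have hia := integrable_pow_div_one_add_mul hw hw0 hk ha
  have hib := integrable_pow_div_one_add_mul hw hw0 hk hb
  rw [← sub_pos, resolventMoment, resolventMoment, ← integral_sub hia hib]
  refine integral_pos_of_pos_on (fun ω => sub_nonneg.2 ?_) (hia.sub hib) hpos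
    fun ω (hω : 0 < w ω) => sub_pos.2 ?_
  · have hω0 := hw0 ω
    have ha0 := mem_Ici.1 ha
    gcongr
  · have ha0 := mem_Ici.1 ha
    gcongr

theorem integral_pow_sub_resolventMoment (hw : Measurable w) (hw0 : ∀ ω, 0 ≤ w ω) {k : ℕ}
    (hk : Integrable (fun ω => w ω ^ k) μ) {σ : ℝ} (hσ : 0 ≤ σ) :
    ∫ ω, w ω ^ k ∂μ - resolventMoment μ w k σ = σ * resolventMoment μ w (k + 1) σ := by
  rw [resolventMoment, resolventMoment, ← integral_sub hk
    (integrable_pow_div_one_add_mul hw hw0 hk hσ), ← integral_const_mul]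
  refine integral_congr_ae (.of_forall fun ω => ?_)
  have hden : 1 + σ * w ω ≠ 0 := by nlinarith [hw0 ω]
  field_simp
  ring

theorem div_inv_resolventMoment_sub_inv (hw : Measurable w) (hw0 : ∀ ω, 0 ≤ w ω)
    (hpos : 0 < μ {ω | 0 < w ω}) {k : ℕ} (hk : Integrable (fun ω => w ω ^ k) μ)
    (hk1 : Integrable (fun ω => w ω ^ (k + 1)) μ) {σ : ℝ} (hσ : 0 < σ) :
    σ / ((resolventMoment μ w k σ)⁻¹ - (resolventMoment μ w k 0)⁻¹) =
      resolventMoment μ w k σ * resolventMoment μ w k 0 / resolventMoment μ w (k + 1) σ := by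
  have hR := resolventMoment_pos hw hw0 hpos hk hσ.le
  have hR0 := resolventMoment_pos hw hw0 hpos hk le_rfl
  have hR1 := resolventMoment_pos hw hw0 hpos hk1 hσ.le
  have hid := integral_pow_sub_resolventMoment hw hw0 hk hσ.le
  rw [← resolventMoment_zero] at hid
  rw [inv_sub_inv hR.ne' hR0.ne', hid]
  field_simp

theorem existsUnique_pos_resolventMoment_eq (hw : Measurable w) (hw0 : ∀ ω, 0 ≤ w ω)
    (hpos : 0 < μ {ω | 0 < w ω}) {k : ℕ} (hk0 : k ≠ 0)
    (hk : Integrable (fun ω => w ω ^ k) μ) {t : ℝ} (ht : 0 < t)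
    (htk : t < ∫ ω, w ω ^ k ∂μ) :
    ∃! σ, 0 < σ ∧ resolventMoment μ w k σ = t :=
  existsUnique_pos_apply_eq (continuousOn_resolventMoment hw hw0 hk)
    (strictAntiOn_resolventMoment hw hw0 hpos hk) (tendsto_resolventMoment_atTop hw hw0 hk0 hk)
    ht (by rwa [resolventMoment_zero])

theorem tendsto_div_of_inv_resolventMoment_sub_inv (hw : Measurable w) (hw0 : ∀ ω, 0 ≤ w ω)
    (hpos : 0 < μ {ω | 0 < w ω}) {k : ℕ} (hk : Integrable (fun ω => w ω ^ k) μ)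
    (hk1 : Integrable (fun ω => w ω ^ (k + 1)) μ) {ι : Type*} {l : Filter ι} {s d : ι → ℝ}
    (hs : ∀ᶠ x in l,
      0 < s x ∧ (resolventMoment μ w k (s x))⁻¹ - (resolventMoment μ w k 0)⁻¹ = d x)
    (hd : Tendsto d l (𝓝 0)) :
    Tendsto (fun x => s x / d x) l
      (𝓝 ((∫ ω, w ω ^ k ∂μ) ^ 2 / ∫ ω, w ω ^ (k + 1) ∂μ)) := by
  have hR0 := resolventMoment_pos hw hw0 hpos hk le_rfl
  have hR0' := resolventMoment_pos hw hw0 hpos hk1 le_rfl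
  have hR_inv : Tendsto (fun x => (resolventMoment μ w k (s x))⁻¹) l
      (𝓝 (resolventMoment μ w k 0)⁻¹) := by
    refine (zero_add (resolventMoment μ w k 0)⁻¹ ▸ hd.add_const _).congr' ?_
    filter_upwards [hs] with x hx
    rw [← hx.2, sub_add_cancel]
  have hs0 : Tendsto s l (𝓝[≥] 0) :=
    tendsto_nhdsGE_of_strictAntiOn (strictAntiOn_resolventMoment hw hw0 hpos hk)
      (hs.mono fun x hx => hx.1.le) (by simpa using hR_inv.inv₀ (inv_ne_zero hR0.ne'))
  have hR {j : ℕ} (hj : Integrable (fun ω => w ω ^ j) μ) :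
      Tendsto (fun x => resolventMoment μ w j (s x)) l (𝓝 (resolventMoment μ w j 0)) :=
    ((continuousOn_resolventMoment hw hw0 hj) 0 self_mem_Ici).tendsto.comp hs0
  have hratio : (fun x => resolventMoment μ w k (s x) * resolventMoment μ w k 0 /
      resolventMoment μ w (k + 1) (s x)) =ᶠ[l] fun x => s x / d x := by
    filter_upwards [hs] with x hx
    rw [← hx.2, div_inv_resolventMoment_sub_inv hw hw0 hpos hk hk1 hx.1]
  rw [← resolventMoment_zero, ← resolventMoment_zero, sq]
  exact (((hR hk).mul_const _).div (hR hk1) hR0'.ne').congr' hratio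

end ResolventMoment

/-- Let `w ≥ 0` with `P(w > 0) > 0` and `E[w³] < ∞`, and set
`λ_c = 1/E[w²]`. Then for every `δ > 0` there is a unique `σ(λ_c+δ) > 0` with
`(λ_c+δ)·E[w²/(1+σ(λ_c+δ)w)] = 1`, and `σ(λ_c+δ)/δ → 1/(λ_c²E[w³])` as
`δ → 0⁺`. -/
theorem critical_exponent_finite_third_moment
    {Ω : Type*} [MeasurableSpace Ω] (μ : Measure Ω) [IsProbabilityMeasure μ]
    (w : Ω → ℝ) (hw_meas : Measurable w) (hw_nonneg : ∀ ω, 0 ≤ w ω)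
    (hw_pos : 0 < μ {ω | 0 < w ω})
    (hw3_int : Integrable (fun ω => (w ω) ^ 3) μ)
    (lamc : ℝ) (hlamc : lamc = 1 / ∫ ω, (w ω) ^ 2 ∂μ) :
    (∀ δ : ℝ, 0 < δ →
      ∃! σ : ℝ, 0 < σ ∧ (lamc + δ) * ∫ ω, (w ω) ^ 2 / (1 + σ * w ω) ∂μ = 1) ∧
    ∀ sf : ℝ → ℝ,
      (∀ δ : ℝ, 0 < δ →
        0 < sf δ ∧ (lamc + δ) * ∫ ω, (w ω) ^ 2 / (1 + sf δ * w ω) ∂μ = 1) →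
      Tendsto (fun δ : ℝ => sf δ / δ) (𝓝[>] 0)
        (𝓝 (1 / (lamc ^ 2 * ∫ ω, (w ω) ^ 3 ∂μ))) := by
  have hw2_int := integrable_pow_of_le hw_meas.aestronglyMeasurable hw3_int (by norm_num : 2 ≤ 3)
  have hI2 : 0 < ∫ ω, w ω ^ 2 ∂μ := by
    simpa using resolventMoment_pos hw_meas hw_nonneg hw_pos hw2_int le_rfl
  have hlamc_pos : 0 < lamc := hlamc ▸ one_div_pos.2 hI2
  have hlamc_inv : (resolventMoment μ w 2 0)⁻¹ = lamc := by
    rw [resolventMoment_zero, hlamc, one_div]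
  refine ⟨fun δ hδ => ?_, fun sf hsf => ?_⟩
  · have hδ_lt : (lamc + δ)⁻¹ < ∫ ω, w ω ^ 2 ∂μ := by
      rw [← resolventMoment_zero, ← inv_inv (resolventMoment μ w 2 0), hlamc_inv]
      exact inv_strictAnti₀ hlamc_pos (by linarith)
    have h := existsUnique_pos_resolventMoment_eq hw_meas hw_nonneg hw_pos two_ne_zero hw2_int
      (by positivity) hδ_lt
    simp only [← mul_eq_one_iff_eq_inv₀ (by positivity : lamc + δ ≠ 0), mul_comm] at h
    exact h
  · have hbranch : ∀ᶠ δ in 𝓝[>] 0, 0 < sf δ ∧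
        (resolventMoment μ w 2 (sf δ))⁻¹ - (resolventMoment μ w 2 0)⁻¹ = δ := by
      filter_upwards [self_mem_nhdsWithin] with δ hδ
      have hR : (resolventMoment μ w 2 (sf δ))⁻¹ = lamc + δ :=
        inv_eq_of_mul_eq_one_left (hsf δ hδ).2
      exact ⟨(hsf δ hδ).1, by rw [hR, hlamc_inv, add_sub_cancel_left]⟩
    convert tendsto_div_of_inv_resolventMoment_sub_inv hw_meas hw_nonneg hw_pos hw2_int hw3_int
      hbranch (tendsto_nhdsWithin_of_tendsto_nhds tendsto_id) using 2
    rw [hlamc]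
    field_simp
end
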